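/- arXiv:2605.30238 — 2 statements merged into one kernel-verified Lean document; each statement's English description precedes it below -/
import Mathlib

section
/- There exists a bipartite RQT process realization with two-dimensional local input and output systems — a real symmetric positive semidefinite 16×16 matrix W on A_1A_2B_1B_2 satisfying Tr[W(N_A⊗N_B)] = 1 for all real CPTP Choi matrices N_A on A_1A_2 and N_B on B_1B_2, together with real local binary-outcome instruments {M^A_{a|x}}_{a∈{0,1}} for x∈{0,1} and {M^B_{b|y}}_{b∈{0,1}} for y∈{0,1} (each element real positive semidefinite, each setting summing to a real CPTP Choi matrix) — such that the probabilities p(a,b|x,y) = Tr[W(M^A_{a|x}⊗M^B_{b|y})] satisfy I_LGYNI(p) := (1/4)[1 + p(0,0|0,1) + p(1,0|0,1) + p(0,0|1,0) + p(0,1|1,0) + p(1,1|1,1)] ≥ 0.86; in particular I_LGYNI(p) strictly exceeds both the causal bound 3/4 and the value 0.8194. -/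
open Matrix BigOperators
open scoped Kronecker ComplexOrder

noncomputable section

/-- Entrywise complex conjugation of a matrix (in the computational basis). -/
def conjM {m n : Type*} (M : Matrix m n ℂ) : Matrix m n ℂ := M.map (starRingEnd ℂ)

/-- Partial trace over the second tensor factor. -/
def ptr2 {a b : Type*} [Fintype b] (M : Matrix (a × b) (a × b) ℂ) : Matrix a a ℂ :=
  fun i j => ∑ z, M (i, z) (j, z)

/-- The Choi space of a qubit input-output pair. -/
abbrev Q2 := Fin 2 × Fin 2

/-- Real CPTP Choi matrix on a qubit pair. -/
def IsRealCPTPChoi (M : Matrix Q2 Q2 ℂ) : Prop :=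
  conjM M = M ∧ M.PosSemidef ∧ ptr2 M = 1

/-- The LGYNI (Lazy Guess Your Neighbour's Input) functional
`I_LGYNI(p) = (1/4)[1 + p(0,0|0,1) + p(1,0|0,1) + p(0,0|1,0) + p(0,1|1,0) + p(1,1|1,1)]`
of the correlation `p(a,b|x,y) = Tr[W (M^A_{a|x} ⊗ M^B_{b|y})]`. -/
def lgyni (W : Matrix (Q2 × Q2) (Q2 × Q2) ℂ)
    (MA MB : Fin 2 → Fin 2 → Matrix Q2 Q2 ℂ) : ℝ :=
  let p : Fin 2 → Fin 2 → Fin 2 → Fin 2 → ℝ :=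
    fun a b x y => ((W * (MA a x ⊗ₖ MB b y)).trace).re
  (1 / 4) * (1 + p 0 0 0 1 + p 1 0 0 1 + p 0 0 1 0 + p 0 1 1 0 + p 1 1 1 1)


set_option maxHeartbeats 16000000

section Helpers

/-- cast an integer matrix to `ℂ`. -/
def czM {m n : Type*} (M : Matrix m n ℤ) : Matrix m n ℂ := M.map Int.cast

lemma czM_apply {m n : Type*} (M : Matrix m n ℤ) (i : m) (j : n) :
    czM M i j = (M i j : ℂ) := rfl

lemma conjM_czM {m n : Type*} (M : Matrix m n ℤ) : conjM (czM M) = czM M := by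
  ext i j
  simp [conjM, czM, Matrix.map_apply]

lemma czM_transpose {m n : Type*} (M : Matrix m n ℤ) : (czM M)ᵀ = czM Mᵀ := rfl

lemma czM_add {m n : Type*} (A B : Matrix m n ℤ) : czM (A + B) = czM A + czM B := by
  ext i j
  simp [czM, Matrix.map_apply]

lemma czM_neg {m n : Type*} (A : Matrix m n ℤ) : czM (-A) = -(czM A) := by
  ext i j
  simp [czM, Matrix.map_apply]

lemma czM_smul {m n : Type*} (a : ℤ) (M : Matrix m n ℤ) :
    czM (a • M) = (a : ℂ) • czM M := by
  ext i j
  simp [czM, Matrix.map_apply]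

lemma czM_mul {m n o : Type*} [Fintype n] (A : Matrix m n ℤ) (B : Matrix n o ℤ) :
    czM (A * B) = czM A * czM B := by
  ext i j
  simp [czM, Matrix.map_apply, Matrix.mul_apply]

lemma czM_one {n : Type*} [Fintype n] [DecidableEq n] :
    czM (1 : Matrix n n ℤ) = 1 := by
  ext i j
  by_cases h : i = j <;> simp [czM, Matrix.map_apply, Matrix.one_apply, h]

lemma czM_kron {m n m' n' : Type*} (A : Matrix m n ℤ) (B : Matrix m' n' ℤ) :
    czM (A ⊗ₖ B) = czM A ⊗ₖ czM B := by
  ext ⟨i, k⟩ ⟨j, l⟩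
  simp [czM, Matrix.map_apply, Matrix.kroneckerMap_apply]

lemma czM_trace {n : Type*} [Fintype n] (A : Matrix n n ℤ) :
    (czM A).trace = ((A.trace : ℤ) : ℂ) := by
  simp [czM, Matrix.trace, Matrix.diag, Matrix.map_apply]

/-- partial trace over the second factor, integer version. -/
def ptr2Z {a b : Type*} [Fintype b] (M : Matrix (a × b) (a × b) ℤ) : Matrix a a ℤ :=
  fun i j => ∑ z, M (i, z) (j, z)

lemma ptr2_czM {a b : Type*} [Fintype b] (M : Matrix (a × b) (a × b) ℤ) :
    ptr2 (czM M) = czM (ptr2Z M) := by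
  ext i j
  simp [ptr2, ptr2Z, czM, Matrix.map_apply]

lemma ptr2_smul {a b : Type*} [Fintype b] (c : ℂ) (M : Matrix (a × b) (a × b) ℂ) :
    ptr2 (c • M) = c • ptr2 M := by
  ext i j
  simp [ptr2, Matrix.smul_apply, Finset.mul_sum, smul_eq_mul]

lemma czM_rank1_sum {n : Type*} [Fintype n] (m : ℕ) (a : Fin m → ℤ) (v : Fin m → n → ℤ) :
    czM (∑ k, vecMulVec (fun p => a k * v k p) (v k)) =
      ∑ k, vecMulVec (fun p => (a k : ℂ) * (v k p : ℂ)) (fun p => (v k p : ℂ)) := by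
  ext i j
  simp only [czM, Matrix.map_apply, Matrix.sum_apply, Matrix.vecMulVec_apply]
  push_cast
  ring

lemma star_c30 : star (((2 : ℂ) ^ 30)⁻¹) = ((2 : ℂ) ^ 30)⁻¹ := by
  simp

lemma nonneg_c30 : 0 ≤ ((2 : ℂ) ^ 30)⁻¹ := by
  have : ((2 : ℂ) ^ 30)⁻¹ = ((((2 : ℝ) ^ 30)⁻¹ : ℝ) : ℂ) := by push_cast; ring
  rw [this, Complex.zero_le_real]
  positivity

lemma psd_term {n : Type*} [Fintype n] [DecidableEq n] (a : ℤ) (ha : 0 ≤ a) (v : n → ℤ) :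
    (vecMulVec (fun p => (a : ℂ) * (v p : ℂ)) (fun p => (v p : ℂ))).PosSemidef := by
  refine Matrix.posSemidef_iff_dotProduct_mulVec.mpr ⟨?_, ?_⟩
  · ext i j
    simp [Matrix.conjTranspose_apply, Matrix.vecMulVec_apply, star_mul', star_intCast]
    ring
  · intro x
    have hmv : (vecMulVec (fun p => (a : ℂ) * (v p : ℂ)) (fun p => (v p : ℂ))).mulVec x
        = fun i => (a : ℂ) * (v i : ℂ) * (∑ j, (v j : ℂ) * x j) := by
      ext i
      simp [Matrix.mulVec, Matrix.vecMulVec_apply, dotProduct, Finset.mul_sum, mul_assoc]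
    rw [hmv]
    have : (star x) ⬝ᵥ (fun i => (a : ℂ) * (v i : ℂ) * (∑ j, (v j : ℂ) * x j))
        = (a : ℂ) * (star (∑ j, (v j : ℂ) * x j) * (∑ j, (v j : ℂ) * x j)) := by
      simp only [dotProduct, Pi.star_apply]
      rw [Finset.sum_congr rfl (fun i _ => by ring : ∀ i ∈ Finset.univ,
        star (x i) * ((a : ℂ) * (v i : ℂ) * (∑ j, (v j : ℂ) * x j))
          = (a : ℂ) * (∑ j, (v j : ℂ) * x j) * ((v i : ℂ) * star (x i)))]
      rw [← Finset.mul_sum]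
      rw [star_sum]
      simp only [star_mul', star_intCast]
      rw [Finset.sum_congr rfl (fun i _ => by ring : ∀ i ∈ Finset.univ,
        (v i : ℂ) * star (x i) = star (x i) * (v i : ℂ))]
      ring
    rw [this]
    apply mul_nonneg
    · have : ((a : ℤ) : ℂ) = (((a : ℝ)) : ℂ) := by push_cast; rfl
      rw [this, Complex.zero_le_real]
      exact_mod_cast ha
    · exact star_mul_self_nonneg _

lemma psd_sum {n : Type*} [Fintype n] [DecidableEq n] (m : ℕ)
    (f : Fin m → Matrix n n ℂ) (h : ∀ k, (f k).PosSemidef) :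
    (∑ k, f k).PosSemidef := by
  classical
  refine Finset.sum_induction f _ (fun a b ha hb => ha.add hb) ?_ (fun i _ => h i)
  exact Matrix.PosSemidef.zero

lemma trace_antisym {n : Type*} [Fintype n] {N A : Matrix n n ℂ}
    (hA : Aᵀ = -A) (hN : Nᵀ = N) : (A * N).trace = 0 := by
  have h := Matrix.trace_transpose (A * N)
  rw [Matrix.transpose_mul, hA, hN, Matrix.mul_neg, Matrix.trace_neg,
    Matrix.trace_mul_comm] at h
  linear_combination (-1/2 : ℂ) * h

lemma transpose_of_real_herm {n : Type*} {N : Matrix n n ℂ}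
    (hc : conjM N = N) (hh : N.IsHermitian) : Nᵀ = N := by
  ext p q
  have h1 := congrFun (congrFun hh q) p
  have h2 := congrFun (congrFun hc p) q
  simp only [Matrix.conjTranspose_apply] at h1
  simp only [conjM, Matrix.map_apply] at h2
  simp only [Matrix.transpose_apply]
  rw [← h1]
  exact h2

end Helpers


def qidx : Q2 → Fin 4 := fun p => ⟨2 * p.1.val + p.2.val, by omega⟩
def pidx : Q2 × Q2 → Fin 16 := fun p => ⟨4 * (qidx p.1).val + (qidx p.2).val, by omega⟩

def X2 : Matrix (Fin 2) (Fin 2) ℤ := !![0, 1; 1, 0]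
def Z2 : Matrix (Fin 2) (Fin 2) ℤ := !![1, 0; 0, -1]
def Yh : Matrix (Fin 2) (Fin 2) ℤ := !![0, -1; 1, 0]

def wTab : Fin 16 → Fin 16 → ℤ :=
![![286093742, (-88536895 : ℤ), 2290912, 151087026, (-33984508 : ℤ), (-17362378 : ℤ), (-22535834 : ℤ), 35710926, 31430158, (-13348703 : ℤ), 116647484, 9062140, 110850637, 29779804, 97297803, (-78207394 : ℤ)],
 ![(-88536895 : ℤ), 99900092, (-29269064 : ℤ), (-94718232 : ℤ), 17362378, (-33984508 : ℤ), (-11585116 : ℤ), (-52040810 : ℤ), (-72228245 : ℤ), (-57893400 : ℤ), (-38325730 : ℤ), 18482142, (-29779804 : ℤ), 110850637, (-16000550 : ℤ), 112229461],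
 ![2290912, (-29269064 : ℤ), 280136032, 54442265, (-85911066 : ℤ), 11585116, 33984508, (-604948 : ℤ), 99157810, (-22537146 : ℤ), (-86938638 : ℤ), (-7787023 : ℤ), 92812301, 16000550, (-110850637 : ℤ), (-29036592 : ℤ)],
 ![151087026, (-94718232 : ℤ), 54442265, 200995774, (-35710926 : ℤ), (-56406090 : ℤ), 604948, 33984508, 141369048, 55306900, 69821207, (-77733520 : ℤ), 78207394, 77880643, 29036592, (-110850637 : ℤ)],
 ![(-33984508 : ℤ), 17362378, (-85911066 : ℤ), (-35710926 : ℤ), 347795630, (-88536895 : ℤ), 48528496, 151087026, (-69351881 : ℤ), (-17155044 : ℤ), (-8868525 : ℤ), 45669070, (-74871518 : ℤ), (-66871367 : ℤ), (-21164904 : ℤ), 142826346],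
 ![(-17362378 : ℤ), (-33984508 : ℤ), 11585116, (-56406090 : ℤ), (-88536895 : ℤ), 161601980, (-29269064 : ℤ), (-48480648 : ℤ), 17155044, (-69351881 : ℤ), (-1336442 : ℤ), (-56381823 : ℤ), (-18705581 : ℤ), (-164195076 : ℤ), (-14899520 : ℤ), (-108582198 : ℤ)],
 ![(-22535834 : ℤ), (-11585116 : ℤ), 33984508, 604948, 48528496, (-29269064 : ℤ), 218434144, 54442265, (-29113179 : ℤ), 1336442, 69351881, 13331704, (-49316106 : ℤ), (-45963356 : ℤ), 19363038, 53918469],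
 ![35710926, (-52040810 : ℤ), (-604948 : ℤ), 33984508, 151087026, (-48480648 : ℤ), 54442265, 139293886, (-45669070 : ℤ), 18400119, (-13331704 : ℤ), 69351881, 7604842, (-103915064 : ℤ), 8115715, 28568156],
 ![31430158, (-72228245 : ℤ), 99157810, 141369048, (-69351881 : ℤ), 17155044, (-29113179 : ℤ), (-45669070 : ℤ), 342528938, 88536895, 67505212, (-151087026 : ℤ), (-95352842 : ℤ), 8840790, (-91106698 : ℤ), (-31096418 : ℤ)],
 ![(-13348703 : ℤ), (-57893400 : ℤ), (-22537146 : ℤ), 55306900, (-17155044 : ℤ), (-69351881 : ℤ), 1336442, 18400119, 88536895, 528722588, 29269064, 164514356, (-8840790 : ℤ), (-95352842 : ℤ), (-6453228 : ℤ), (-69099294 : ℤ)],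
 ![116647484, (-38325730 : ℤ), (-86938638 : ℤ), 69821207, (-8868525 : ℤ), (-1336442 : ℤ), 69351881, (-13331704 : ℤ), 67505212, 29269064, 164983112, (-54442265 : ℤ), (-61666218 : ℤ), 6453228, 95352842, (-16528972 : ℤ)],
 ![9062140, 18482142, (-7787023 : ℤ), (-77733520 : ℤ), 45669070, (-56381823 : ℤ), 13331704, 69351881, (-151087026 : ℤ), 164514356, (-54442265 : ℤ), 244123370, 31096418, (-83673622 : ℤ), 16528972, 95352842],
 ![110850637, (-29779804 : ℤ), 92812301, 78207394, (-74871518 : ℤ), (-18705581 : ℤ), (-49316106 : ℤ), 7604842, (-95352842 : ℤ), (-8840790 : ℤ), (-61666218 : ℤ), 31096418, 255513358, 88536895, (-20602592 : ℤ), (-151087026 : ℤ)],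
 ![29779804, 110850637, 16000550, 77880643, (-66871367 : ℤ), (-164195076 : ℤ), (-45963356 : ℤ), (-103915064 : ℤ), 8840790, (-95352842 : ℤ), 6453228, (-83673622 : ℤ), 88536895, 441707008, 29269064, 76406552],
 ![97297803, (-16000550 : ℤ), (-110850637 : ℤ), 29036592, (-21164904 : ℤ), (-14899520 : ℤ), 19363038, 8115715, (-91106698 : ℤ), (-6453228 : ℤ), 95352842, 16528972, (-20602592 : ℤ), 29269064, 251998692, (-54442265 : ℤ)],
 ![(-78207394 : ℤ), 112229461, (-29036592 : ℤ), (-110850637 : ℤ), 142826346, (-108582198 : ℤ), 53918469, 28568156, (-31096418 : ℤ), (-69099294 : ℤ), (-16528972 : ℤ), 95352842, (-151087026 : ℤ), 76406552, (-54442265 : ℤ), 331138950]]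

def WI : Matrix (Q2 × Q2) (Q2 × Q2) ℤ := Matrix.of fun p q => wTab (pidx p) (pidx q)

def wvTab : Fin 16 → Fin 16 → ℤ :=
![![286093742, (-88536895 : ℤ), 2290912, 151087026, (-33984508 : ℤ), (-17362378 : ℤ), (-22535834 : ℤ), 35710926, 31430158, (-13348703 : ℤ), 116647484, 9062140, 110850637, 29779804, 97297803, (-78207394 : ℤ)],
 ![0, 20742009370183239, (-8170865809399248 : ℤ), (-13721517271679874 : ℤ), 1958384875615816, (-11259966101685246 : ℤ), (-5309681956539502 : ℤ), (-11726815563996250 : ℤ), (-17881320291463380 : ℤ), (-17744792158999985 : ℤ), (-637145467659480 : ℤ), 6089958902610664, 1294555646365547, 34350284922282234, 4036788144383585, 25183906629331432],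
 ![0, 0, 1858947651353382950636896, 237419865869948322193525, (-573463961865540671907346 : ℤ), (-26134467996144814229796 : ℤ), 185668325805697777009020, (-117799395989734651639092 : ℤ), 513606536396225021180746, (-324013867935827003142474 : ℤ), (-613617764142230998505846 : ℤ), 3635391085536262855453, 647891586605274311166353, 435994970014138668638910, (-733378115451875679409905 : ℤ), 43322436396274909765232],
 ![0, 0, 0, 158182261504330322717899920672899, (-4911441711172544968861137627614 : ℤ), (-135313813314833573535540704654844 : ℤ), (-5950610999790396358926300084316 : ℤ), (-18244387906168524495253320834220 : ℤ), 137443786431961544844841650839014, 50768786944259270242861622943834, 33611525448971570374830132451590, (-127346552734166030550726421257253 : ℤ), 19876200125183666825941773846919, 248221476954978847134715300019698, 993994606311533920501339170073, (-22524388253595114049328784564624 : ℤ)],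
 ![0, 0, 0, 0, 150641823492036006837861542096028100630870, (-42856079777972331425295708280839094527327 : ℤ), 26474276983032602548797768458048219947316, 72908624637723622554480341535194050213262, (-16374451579315009162403823919467367536261 : ℤ), (-12572381156982260766714881784774187237250 : ℤ), (-10259172450113676933860323220433752589747 : ℤ), 20296805916433237613440499612583442096180, (-15608533833283219279440105789345534316078 : ℤ), (-24235574892925038061931075672414334364737 : ℤ), (-20711365341716757929388430032044561568268 : ℤ), 60163905130914687231949085469109398838912],
 ![0, 0, 0, 0, 0, 7708375623065134200577153532960050520722805713743, (-4097640891114193379112586958056117130059157165844 : ℤ), (-5045192020762964759486340590365208964781920666918 : ℤ), 5966653397553054391016874708274796320009291078289, (-13356833874331825084510134186242622689084944306740 : ℤ), 1898473139461774640675027997459701722261394829863, (-13663498501125267765524586205106881501949707335610 : ℤ), (-1267708988854906405306341763392187396915960628028 : ℤ), 508027236127423928335143951998169225681997045853, (-2227277235934393508228306245551117483521190769088 : ℤ), (-5988189131142006262462129670032951945312208616608 : ℤ)],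
 ![0, 0, 0, 0, 0, 0, 474942189787689050709046590590572973253196006962959566464, 8455246493855813069362216652109112376860688658322498833, (-51789757498118051704588012901928547874471143815601884841 : ℤ), (-134541571008480159632759971309266876515971373662995815294 : ℤ), 251840986502210145072732844776895962663428103743888366325, (-99867728536607083966024802062241891075294674197854122348 : ℤ), (-120960059729730593309062885098034945006482977998486956390 : ℤ), (-8708309708162374981181187518483856059831487284720799062 : ℤ), 105512810872873990145949083465797057732145702354581098386, 66286825900458040133183176969791566911274746372202766343],
 ![0, 0, 0, 0, 0, 0, 0, 2075952829820673717780146424062800270792925880648195484227283569, (-4545294261540999746659200863501418162430744879230124577808223241 : ℤ), (-9356030461093986059509439183878286934614145654169752360159732286 : ℤ), (-2489135824602151231416794635021985121255776392672081114537555755 : ℤ), (-1106004572089714961952346180341640472893393152085691690991393644 : ℤ), 2334646547568393278352478751020731797310703095914710419691922778, 1049834819350698655631206287851075862458554871142275301587534186, 1267046604808522203640840519721273235325921849057491936855954898, (-117215095273875876592922622275115303997073371716909126476656729 : ℤ)],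
 ![0, 0, 0, 0, 0, 0, 0, 0, 314377348901927419359083076619725299220040693495150433677839244297432811, (-135771327710261576858647758788948572615399537164603545996740872033107927 : ℤ), 80148028518988253328833950450901877561807473944296850763358276149593800, (-59262373241212923593023747724489197271044326526193028057322313569582567 : ℤ), (-338536858597873224787942866787041105352297514719957590963693504241087782 : ℤ), (-57234086444700313264810095022167394025274049317186224005886630103263999 : ℤ), (-99921124822370814235310335149967719368658650308318925511756195596566903 : ℤ), 336058310887495657736357094691216022064005502352712527471521043483293625],
 ![0, 0, 0, 0, 0, 0, 0, 0, 0, 1059039423273837450875429369044843207321896678484070932952930764870493667237446, (-194324416967562535893767497302617844275886086102392603465275376635393194182429 : ℤ), 431630208847991313191940553712543559674553413209751818258386166223032719950361, 920277278691717582387816859267989372461148551133546602893412313390201941192439, (-255205772690729963193673208122595925248720789556860863410067386336531584799761 : ℤ), (-1848301272946490504364283204828363863283504673168032869985478828326540611185848 : ℤ), (-84651461399489311512020312782130396445702347031023707725738594160584954651474 : ℤ)],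
 ![0, 0, 0, 0, 0, 0, 0, 0, 0, 0, 1154064845226032342272733865132691526369274694394281090085574527952311935434748618837, (-131877266178114353725982226841093236146139370533336092414272644742294734095101441973 : ℤ), (-3977950943402208019445457894640354187086717873744839568263953340096365974422754172463 : ℤ), 247859159329456864314475133329624626059465099960144684529692659814906621200694213313, 8970749896127501085758187863095503611191047694849540734097668335578007248890744107060, (-521245785773354810126313588644153573346540508316806310662561765648048646244247573656 : ℤ)],
 ![0, 0, 0, 0, 0, 0, 0, 0, 0, 0, 0, 8382865174129130349883777917659296175162815694227974367096154960368856104818042899075713, 3631812256038745944336276023715798365595916983154307017441170611582557707263029105241572, (-3222315004700628824523544910303593517286217819618318239024692766637265055634080599156693 : ℤ), (-1073335102051008997212433042724012489227121450908852481329334390362468548107461299341150 : ℤ), 5586499643015403673675475187748065921039168541082694366971138661124926196001311715735090],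
 ![0, 0, 0, 0, 0, 0, 0, 0, 0, 0, 0, 0, 517145395386541901637700379831016351549294276764987281382063473860660088943346339278905796567, (-33089599924876290944715619945147247775757807541366677475878892046578287937371714395998063011 : ℤ), (-1110118500710783678780926709333072301761043170160002430149759588053488027793730121979418364349 : ℤ), 74103966636699960364851249772220111259519985810155635091394684549971118203260291929782941165],
 ![0, 0, 0, 0, 0, 0, 0, 0, 0, 0, 0, 0, 0, 323179052166722017285501988027934188157364578010964748134791986055351800573200768119165538213895, 376014748299363981671607770049987108815314916964602455746383358646622945624942705594904989276499, (-46373210694936432285603134396288155544359960238165791852844143428307083753383528815600130015653 : ℤ)],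
 ![0, 0, 0, 0, 0, 0, 0, 0, 0, 0, 0, 0, 0, 0, 2078910086082210813258782458943223818242793818258607112465620387281820071768843528931033559677714593, (-590203648270681042999290307968469540742369260546442558673769063617604867194166410861773690995738731 : ℤ)],
 ![0, 0, 0, 0, 0, 0, 0, 0, 0, 0, 0, 0, 0, 0, 0, 1]]

def wv : Fin 16 → (Q2 × Q2) → ℤ := fun k p => wvTab k (pidx p)

def wa : Fin 16 → ℤ :=
![11741667134178593717514166877608718401273078374904873593643109563583867650181282218385038405027845294829669831219842643385358696706330545670440931846622987111283861432582266029683719369864031923389953281943046821460490200095949518855810249909245725095676417430108987640834726035556560052289086399606307223762552475958540402080085162386037211877673090815086472807430133694248508021468510707390503014019799899521708092143082496091699352026645854384737819534147456049065776356248257627605022057473141827609126422720427248589018836687941615193250890865406843763364833134283549012024379599128343654362919542637945988210923201171523673611951155017723323257799862890748930750549667689335313593388157268372876223089893563980803774011596453146499126596688730747608639296735060925537454696550980057483582784165071528541828948696712627124065327878343639205651162689977198338209221518421145280, 566081468994865540127610920604905459253119414797409825159819942007451103751370973639895763830186932123692807297407430352008806202562177515335373749322071999470504254307512652552073601677436833049322908202500823626056058988056210325725921605124124623162055680735882134063097462056202519999120504979512907314370358436259952956070973217688779918637025303377121313481723365063132767921303244601194167177368394059417700715464909465051421750523454561268171495565920553452617239848163924399600459158894085441892259129672756141386157831310928436746690547348152940023443106645679493327011833976941036012887445925398331140904268927711679858232857143491908120167026476409196848513376352216476268228798045975374057886823334174768052044359197493600534016495763568106033117478959056276027886011798527293726067477053524138071543932928834439406069036237317567151406260129846899520,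 261361365862600900553741783665215191674544304738313819968748017492433321648085748706918913735990074825964168045893782379200937904600444048444909299868474484017350450722539825845816984696080807212159004872331801002790558446257980746074568253641945514389350587611862132339378352900192298968994980219531294312534417535005883611249089029896586044500923252871069696983193456867888610336014998948896466223118062111535468019090369560298088169125863907697059982690427506863232230767934312975251097172755588560081236858045403381680071620256336066309829788994870987939119120699803318521200661376883466906545197339129210103305191987857787755586125458224382908444308663853837197493854099141493686277052902775027190535924090964800906160367620910720240931683549880844396467771203261475571127897741828308524550594106068372599444852722403144612278950619331847716620, 11423868155148252826860849980645179358125574759272521439010097892020312354935244964386619206432778572170726055185353647168154050798935317234941608850287794812056249774705785425708917133234345837498322296583459201470557561011730396863062150903062186038424419657149327871023153214206061305201024155981466057597664650271875688053928932320328960406521664122040939841163597252850190700089529546716351463089177210582024027419048186718299271590570730341499492267827627807221957296318197583216055389548662023222517343199048975744971101256699022963040633812177674428384830688165921013808593120205191934883420633405898298137527847905298539968343211758001343934776266389951072113105928803775731827774712363151234989106981954578115141001401015653363331570352362243917736218324171114081742205139009359348732106394044564414781009186967054312181940, 46990874079327319935051693922144374789353684096388449362149323503322839503801527729373034857883890270420364289772835381667956251508871037069266117211227730624794533082430136244657719863325556487497919479453065836244170132149051649178588511176952888534029318422691331683049019013801932807626627824168500330263888516271183927528960680430985182454302947495546776622962581309400824580628396852056338764481669692162176232897789448130194886850655352689050293893597581296719335091781891414371816569598890579018263959971609124416551966607542643977022196853157703740861543577473431226627528981124955913518210781825489832378915672753332015275375083822707893006262633804070805425052727025970665959367225539764740803397162055772062588736721071531335996784798908664096178437795054676567843517074765550418687781293847048524673984,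 2892875138190604160360468655116579961877595974213243550520778293131174828502818580352392667027649349104920115495254419210817663013086257182414127199144292256922761296628572323993423128533658608019778246981532886838137768957444382958043997606392236156306676778925640037601208893732029332276339670840013191570703622415142151884627195813514751417755721151260737813893161507887504761624131761667150821916798024410470136892922472941860746659298024637275253299699824621562072886861117704569876493707290972006404588252153736774388072248360523370695413508729322400157369934285984298695028891676226609707665856595665002750342532028957374274756330541402301906094945903250767885303840722983954536902814506647294656078959136493017474976787251667091350836090788628622131811289419547492001495365231204997107548736, 2752680191329915194325879632215038311401697566459100455551487591822435401576654312440191576978937629355472557293808681842152505456951586257807979688147354135403809274378870659083293946553183750328338083657665019032896392882977812698430498183032686499095155866844771861185013195294599350123669352335915476075146981435792916713109772757065217195246642525099049656559845284503466423468151848618600143253526083934443905094717900647933465289968714006225968602447851830965667002329809843424065489667674682622224197046278499974552191426268075650700969149903187278091940046108384438557413870249889658587021982022171491668386734121162185732732223580259018184044953816801669138927019395722638327969145257190930283757972171675237737660644893421547760877789391744634658042954114842584808924614765, 10221182572233452206558442608651858036337233184674920845499443990636538936352829670643056434087575467633747126653354620029936524065356522746430621498294972788387798853557411714195711629140895736997679469657872233406333401673920392091304107507660122876106156761205518016663975994585474390944863902332419362095984382927947201945487112602507832878178356054675770802900762469080226628189210357306208099428780046058500630243506102050233714018635451286192665576098142982308473714505373174322681638308389799345077938722518284428644778992694356602179657857892157919488649259444234034734103117912145390056894985569112433364710643978086920000014965857197366560821779076840318905331039086627313871607948447049556744511325528428303752269782723665665341539841197567943815135756303955,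 3431453633689473401230081167770142497277706625768408478753613437489135265683007163573739148112201827217472436109538065358694529460788515274704207615388784835841766834910627081001290711739914015902731493646316058353497862608631771735040678319511263109801003002872670570708372072867338086825973728125169094953776626575945329638514498902561848998156503609474917075724826002538386269632287258350416659291780172691303754473076346582432012394595654633839431147123353445322900660922844441680188492412199698762176064211290363676399479414759899627739157030265935882842919986399040480720933005852078867488310571306838313621759718534939910391449367636076592085613993687916200965471388098394221987818824376038566131622147604860428875369078516303677447120820357397760, 6726412373993514883272331731771053451130307042242025935924835203079551628850530596944677526534883567929059641299103792541268384114839391192168962989232078368296979322692519202565327425782740497754050221935708122707656864062298292644162745302632649836716725143451381419736137954502125714657481629693876962294927439420738470529815683611896637639451493959009650985177847334305951092380747641866942209968023199741279096371423829340473549412820964400423247396588004118015386905084762651483821336651571379998858808855363840977979202330326854240577052692129220748329072339150971894387395309758295480238543885705099872632154347814798177894433054281730473104646856920000227818368339282542436564648203963930576610550392194725173534594723482788640640, 5497000532954544240302023039691070792962512742047587916462259457054321349947991418508869662647340507564051046155680025122278271243106882760223369627541394246331621043234269573514086825312321977345804643279290028055493357396525261137594118227523617386096365219629254636141439295161911499439061211542497234416035089995084456840047125282471928359363896784935660014033194472144196834029840860874463756091352520582298386514354003090016909271512161038840393752119017721549281771012903101891454709978946413805953430749080927381648548542547403328672746781389965535958795974192398781963852507466336224788210539049500728662463371094824485708020844411898460389212838204681602143349492984648272700861593087951669026748808475346693299173760,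 694457104251463670508427785138866272248176196676108717549960161736026078922731556247020485892564037112208739596765699171746976420192726681142441124410777430569215159262013417874156333023942924611472973242097682172187507134607364994616549614372500513891667025261558540672645258658585142034836437280746808336974354668525619141769178130401761744685687152892275156624439555186192410925969408521696878798042710050469982187450604953041665937599334277097149729544933152178362650675035679715323794917715154525601935907326446497803592023092964776145994190511560019797512140802581618921339531776906794350762984692662834724484395371390841063488701017953883561075632336497543398629471659076834641523472396105784579761101747697920, 3099509490691834861924187597297034428493289364510975434220315310035190966585538117525405220289608161445913850888414684501361089902079356064510010123560577558631731173889384843178048245075682017637373114254767916467477412315808792723578768824887745900391108387151984921355216708589533919884356684717930229507887400080818581248313956640670321674806089131339791563017977147346320829842466066937510588881491747474101620081324148244474729942193290246046146927495194616205728201783697027390432966101818551360804841753751059186636779468047675421595301076763430125327766648346437463358299452811722518954973351151260645398447668131717762559047619597965611306659738093848477777255381289544229411774033247116757648586240, 321589781171822684984448087346910287563534373447465093815741667048144705310253847094965396598776196285074480387660003506423455211617048370527551634541903317706282264732955926793924099403846493086218169801108027570728897759017257770480980736424288709408198564238016375052696849566511038154893326805782418635282629888342215886319130223431583612460109690352868255187656505615398983949748574658899418534506900645394499514290593782607817868880158889636826304419589906207436248481706623279342395815324580711547758581391603635464126237982941685449028498323255725571977494336572071833275749600232714417242167472511168785745303853525960611308572778990081167064009196655631865136616678012028841410259730124007424,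 119997018377395829237918324233763278852340270789873192013643909527451393249615821191834344948624770280576058791169242350940604048735536992022868832970454647567489803931178377862994753407405900197050536053526564643161347065918577907292276139631765356607422044827187975719345705510396048465573513059073113569707180910172846774318742751969115015728198431879701219110295496624748568852184123153292765694307245150068597565100315596381251990081538822628464625170548754406803605409139519620819432036065383902213343585164198311349919506801174702456282561271263142665809759884652057125648632550166512471081447769335132484275887772316244451842433427797217712741375874222901619523141992357936949644074845184, 22404681220888711527038271457787651615662695659693527103912344208959183369986879336615564235423871969071981747402472244868506981862895816557175815414755658113791356853603131317107514076787943463715455390926115338519195269943199117618628693000692924740280525139589736774966157103862671039180415711190007958274564727784315148022851131514220101477822963416906387290506029005581012351549847636227447040457958007937469648545751345388796035433771418767553787903837223055635808214759206956593300706706208960307433090784892172482571103679481410206858966744267907047163620613913322069178757957060101229433543933475251991773704138636006621630022045860422476745137630628951453887789880196621870791502063711485843960069304701235653911734457957220002851257168441705927925879310102594270353994741018367498216180810308736887445512881247718879494918052286930041776001401896324523975136605703821258151093923840]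

def lwdiv : ℤ := 3359217487735569972941318940027534259244472556135814180442344627561695626873110008215836834108127874594913494638193206497288817552957180899758344981967340445884970341456941211271698351002282924170089059636267296032837546499778956892558312838491269890125374283733903741998158775057201318007100393824675760447859957318343860489276147785699034497330340803993919059058932352147839537778942563444416062543203015345389478312895270721574642760278396189716750479444942480857763561894189105661563258415030209957413891627160851387596619096540102968161200512517862284670407622592769025890457754743087774338642277998218518961150903897779991625229761860242541871499593461501298780923622986098433358675884371393294409966614452100984567874699980674609609327778403788813813167931181962784993775291744378412853302288563659298191647456568538592574547905172252502242648680626362567254457763112027385080837760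


set_option maxHeartbeats 16000000 in
lemma idW : lwdiv • WI = ∑ k : Fin 16, vecMulVec (fun p => wa k * wv k p) (wv k) := by
  decide

set_option maxHeartbeats 16000000 in
lemma symWI : WIᵀ = WI := by decide

set_option maxHeartbeats 1600000 in
lemma wa_nonneg : ∀ k, 0 ≤ wa k := by decide

lemma lwdiv_pos : 0 < lwdiv := by decide

def rTab0 : Fin 4 → Fin 4 → ℤ :=
![![(-21720680 : ℤ), (-42788474 : ℤ), 36331071, 75215594],
 ![(-42788474 : ℤ), (-111044238 : ℤ), (-30431438 : ℤ), (-34677055 : ℤ)],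
 ![36331071, (-30431438 : ℤ), (-33787800 : ℤ), 31017092],
 ![75215594, (-34677055 : ℤ), 31017092, (-24582682 : ℤ)]]

def RM0 : Matrix Q2 Q2 ℤ := Matrix.of fun p q => rTab0 (qidx p) (qidx q)

def rTab1 : Fin 4 → Fin 4 → ℤ :=
![![8961769, (-88536895 : ℤ), 979197, 151087026],
 ![(-88536895 : ℤ), (-177231881 : ℤ), (-29269064 : ℤ), (-96029947 : ℤ)],
 ![979197, (-29269064 : ℤ), 20397093, 54442265],
 ![151087026, (-96029947 : ℤ), 54442265, (-58743165 : ℤ)]]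

def RM1 : Matrix Q2 Q2 ℤ := Matrix.of fun p q => rTab1 (qidx p) (qidx q)

def rTab2 : Fin 4 → Fin 4 → ℤ :=
![![0, (-2678439 : ℤ), (-11410219 : ℤ), (-728649 : ℤ)],
 ![2678439, 0, (-3818813 : ℤ), 10372973],
 ![11410219, 3818813, 0, 7951369],
 ![728649, (-10372973 : ℤ), (-7951369 : ℤ), 0]]

def RM2 : Matrix Q2 Q2 ℤ := Matrix.of fun p q => rTab2 (qidx p) (qidx q)

def rTab3 : Fin 4 → Fin 4 → ℤ :=
![![0, 4260794, (-8483688 : ℤ), (-2307254 : ℤ)],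
 ![(-4260794 : ℤ), 0, 9019172, (-4734902 : ℤ)],
 ![8483688, (-9019172 : ℤ), 0, 8566960],
 ![2307254, 4734902, (-8566960 : ℤ), 0]]

def RM3 : Matrix Q2 Q2 ℤ := Matrix.of fun p q => rTab3 (qidx p) (qidx q)

def rTab4 : Fin 4 → Fin 4 → ℤ :=
![![0, (-23467424 : ℤ), 3939788, 61938232],
 ![23467424, 0, 7332054, (-27282690 : ℤ)],
 ![(-3939788 : ℤ), (-7332054 : ℤ), 0, 21184148],
 ![(-61938232 : ℤ), 27282690, (-21184148 : ℤ), 0]]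

def RM4 : Matrix Q2 Q2 ℤ := Matrix.of fun p q => rTab4 (qidx p) (qidx q)

def rTab5 : Fin 4 → Fin 4 → ℤ :=
![![0, (-6312380 : ℤ), (-6182539 : ℤ), 16269162],
 ![6312380, 0, 8668496, 10108281],
 ![6182539, (-8668496 : ℤ), 0, 7852444],
 ![(-16269162 : ℤ), (-10108281 : ℤ), (-7852444 : ℤ), 0]]

def RM5 : Matrix Q2 Q2 ℤ := Matrix.of fun p q => rTab5 (qidx p) (qidx q)

def rTab6 : Fin 4 → Fin 4 → ℤ :=
![![0, 13101584, (-23203928 : ℤ), (-33403672 : ℤ)],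
 ![(-13101584 : ℤ), 0, 2565944, 2552262],
 ![23203928, (-2565944 : ℤ), 0, (-7962012 : ℤ)],
 ![33403672, (-2552262 : ℤ), 7962012, 0]]

def RM6 : Matrix Q2 Q2 ℤ := Matrix.of fun p q => rTab6 (qidx p) (qidx q)

def rTab7 : Fin 4 → Fin 4 → ℤ :=
![![0, (-26761332 : ℤ), 2665382, 66882103],
 ![26761332, 0, 11713105, 8039406],
 ![(-2665382 : ℤ), (-11713105 : ℤ), 0, 30852746],
 ![(-66882103 : ℤ), (-8039406 : ℤ), (-30852746 : ℤ), 0]]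

def RM7 : Matrix Q2 Q2 ℤ := Matrix.of fun p q => rTab7 (qidx p) (qidx q)

def lTab0 : Fin 4 → Fin 4 → ℤ :=
![![1311715, (-54223450 : ℤ), 71571576, 95055052],
 ![(-54223450 : ℤ), 47549299, (-18990852 : ℤ), (-71571576 : ℤ)],
 ![71571576, (-18990852 : ℤ), 68484409, (-76386458 : ℤ)],
 ![95055052, (-71571576 : ℤ), (-76386458 : ℤ), (-19623395 : ℤ)]]

def LM0 : Matrix Q2 Q2 ℤ := Matrix.of fun p q => lTab0 (qidx p) (qidx q)

def lTab1 : Fin 4 → Fin 4 → ℤ :=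
![![8696517, (-33984508 : ℤ), 53150838, 110850637],
 ![(-33984508 : ℤ), 70398405, (-69351881 : ℤ), (-53150838 : ℤ)],
 ![53150838, (-69351881 : ℤ), 83055251, (-95352842 : ℤ)],
 ![110850637, (-53150838 : ℤ), (-95352842 : ℤ), (-3960329 : ℤ)]]

def LM1 : Matrix Q2 Q2 ℤ := Matrix.of fun p q => lTab1 (qidx p) (qidx q)


set_option maxHeartbeats 16000000 in
lemma idDecomp : WI = (268435456 : ℤ) • ((1 : Matrix Q2 Q2 ℤ) ⊗ₖ (1 : Matrix Q2 Q2 ℤ)) + (X2 ⊗ₖ (1 : Matrix (Fin 2) (Fin 2) ℤ)) ⊗ₖ RM0 + (Z2 ⊗ₖ (1 : Matrix (Fin 2) (Fin 2) ℤ)) ⊗ₖ RM1 + (Yh ⊗ₖ (1 : Matrix (Fin 2) (Fin 2) ℤ)) ⊗ₖ RM2 + ((1 : Matrix (Fin 2) (Fin 2) ℤ) ⊗ₖ Yh) ⊗ₖ RM3 + (X2 ⊗ₖ Yh) ⊗ₖ RM4 + (Yh ⊗ₖ X2) ⊗ₖ RM5 + (Z2 ⊗ₖ Yh) ⊗ₖ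 RM6 + (Yh ⊗ₖ Z2) ⊗ₖ RM7 + LM0 ⊗ₖ (X2 ⊗ₖ (1 : Matrix (Fin 2) (Fin 2) ℤ)) + LM1 ⊗ₖ (Z2 ⊗ₖ (1 : Matrix (Fin 2) (Fin 2) ℤ)) := by
  decide

def mTa00 : Fin 4 → Fin 4 → ℤ :=
![![435079622, (-210358018 : ℤ), (-210409498 : ℤ), (-435059190 : ℤ)],
 ![(-210358018 : ℤ), 101791290, 101765940, 210409498],
 ![(-210409498 : ℤ), 101765940, 101777146, 210427174],
 ![(-435059190 : ℤ), 210409498, 210427174, 435093766]]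

def mMa00 : Matrix Q2 Q2 ℤ := Matrix.of fun p q => mTa00 (qidx p) (qidx q)

def mvTa00 : Fin 4 → Fin 4 → ℤ :=
![![217539811, (-105179009 : ℤ), (-105204749 : ℤ), (-217529595 : ℤ)],
 ![0, 1315008543002, 534347857847, 953426213012],
 ![0, 0, 631633700317633, 246498584530128],
 ![0, 0, 0, 1]]

def maa00 : Fin 4 → ℤ := ![118657673137950353705622038, 631633700317633, 217539811, 122555283474461565883075935630059970768]

def mla00 : ℤ := 12906383894064748436252083891977409


set_option maxHeartbeats 16000000 in
lemma idMa00 : mla00 • mMa00 = ∑ k : Fin 4,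
    vecMulVec (fun p => maa00 k * mvTa00 k (qidx p)) (fun p => mvTa00 k (qidx p)) := by
  decide

def mTa01 : Fin 4 → Fin 4 → ℤ :=
![![151971533, (-298077904 : ℤ), 37790776, (-74125060 : ℤ)],
 ![(-298077904 : ℤ), 859202065, (-74128440 : ℤ), 213661572],
 ![37790776, (-74128440 : ℤ), 9408840, (-18434024 : ℤ)],
 ![(-74125060 : ℤ), 213661572, (-18434024 : ℤ), 53143568]]

def mMa01 : Matrix Q2 Q2 ℤ := Matrix.of fun p q => mTa01 (qidx p) (qidx q)

def mvTa01 : Fin 4 → Fin 4 → ℤ :=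
![![151971533, (-298077904 : ℤ), 37790776, (-74125060 : ℤ)],
 ![0, 41723818121782429, (-817365085016 : ℤ), 10375434121355636],
 ![0, 0, 59476907899125297205, (-3245176352749793 : ℤ)],
 ![0, 0, 0, 1]]

def maa01 : Fin 4 → ℤ := ![2481603687629108573142094358971810945, 59476907899125297205, 1215772264, 4299802568923410850181732598071891360798799472264]

def mla01 : ℤ := 377133116707448765283846706563598413097828685


set_option maxHeartbeats 16000000 in
lemma idMa01 : mla01 • mMa01 = ∑ k : Fin 4,
    vecMulVec (fun p => maa01 k * mvTa01 k (qidx p)) (fun p => mvTa01 k (qidx p)) := by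
  decide

def mTa10 : Fin 4 → Fin 4 → ℤ :=
![![435079622, (-210358018 : ℤ), (-210409498 : ℤ), (-435059190 : ℤ)],
 ![(-210358018 : ℤ), 101791290, 101765940, 210409498],
 ![(-210409498 : ℤ), 101765940, 101777146, 210427174],
 ![(-435059190 : ℤ), 210409498, 210427174, 435093766]]

def mMa10 : Matrix Q2 Q2 ℤ := Matrix.of fun p q => mTa10 (qidx p) (qidx q)

def mvTa10 : Fin 4 → Fin 4 → ℤ :=
![![217539811, (-105179009 : ℤ), (-105204749 : ℤ), (-217529595 : ℤ)],
 ![0, 1315008543002, 534347857847, 953426213012],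
 ![0, 0, 631633700317633, 246498584530128],
 ![0, 0, 0, 1]]

def maa10 : Fin 4 → ℤ := ![118657673137950353705622038, 631633700317633, 217539811, 122555283474461565883075935630059970768]

def mla10 : ℤ := 12906383894064748436252083891977409


set_option maxHeartbeats 16000000 in
lemma idMa10 : mla10 • mMa10 = ∑ k : Fin 4,
    vecMulVec (fun p => maa10 k * mvTa10 k (qidx p)) (fun p => mvTa10 k (qidx p)) := by
  decide

def mTa11 : Fin 4 → Fin 4 → ℤ :=
![![34812445, (-31073700 : ℤ), (-137863356 : ℤ), 127216612],
 ![(-31073700 : ℤ), 27755781, 123095240, (-113588992 : ℤ)],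
 ![(-137863356 : ℤ), 123095240, 546142120, (-503955416 : ℤ)],
 ![127216612, (-113588992 : ℤ), (-503955416 : ℤ), 465047296]]

def mMa11 : Matrix Q2 Q2 ℤ := Matrix.of fun p q => mTa11 (qidx p) (qidx q)

def mvTa11 : Fin 4 → Fin 4 → ℤ :=
![![34812445, (-31073700 : ℤ), (-137863356 : ℤ), 127216612],
 ![0, 134353560909, 264341384920, (-243940060208 : ℤ)],
 ![0, 0, 8773087461020323, (-7263704072761061 : ℤ)],
 ![0, 0, 0, 1]]

def maa11 : Fin 4 → ℤ := ![1178695540554178129467353607, 43865437305101615, 55699912, 777017858290392105800028781479201766920]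

def mla11 : ℤ := 41033273677287595652285126739239115


set_option maxHeartbeats 16000000 in
lemma idMa11 : mla11 • mMa11 = ∑ k : Fin 4,
    vecMulVec (fun p => maa11 k * mvTa11 k (qidx p)) (fun p => mvTa11 k (qidx p)) := by
  decide

def mTb00 : Fin 4 → Fin 4 → ℤ :=
![![425122692, (-217953714 : ℤ), 217953714, 425117324],
 ![(-217953714 : ℤ), 111748220, (-111742852 : ℤ), (-217953714 : ℤ)],
 ![217953714, (-111742852 : ℤ), 111748220, 217953714],
 ![425117324, (-217953714 : ℤ), 217953714, 425122692]]

def mMb00 : Matrix Q2 Q2 ℤ := Matrix.of fun p q => mTb00 (qidx p) (qidx q)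

def mvTb00 : Fin 4 → Fin 4 → ℤ :=
![![212561346, (-108976857 : ℤ), 108976857, 212558662],
 ![0, 240222184537, (-50050633649 : ℤ), (-97497961396 : ℤ)],
 ![0, 0, 145136409093, 48748980698],
 ![0, 0, 0, 1]]

def mab00 : Fin 4 → ℤ := ![11621661749392056931647, 145136409093, 380343101776, 10977056264126613229884391921586192]

def mlb00 : ℤ := 1235158032103745151549758158431


set_option maxHeartbeats 16000000 in
lemma idMb00 : mlb00 • mMb00 = ∑ k : Fin 4,
    vecMulVec (fun p => mab00 k * mvTb00 k (qidx p)) (fun p => mvTb00 k (qidx p)) := by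
  decide

def mTb01 : Fin 4 → Fin 4 → ℤ :=
![![80899289, (-65695336 : ℤ), (-210675852 : ℤ), 171102840],
 ![(-65695336 : ℤ), 57068105, 171104944, (-148605388 : ℤ)],
 ![(-210675852 : ℤ), 171104944, 548720220, (-445641112 : ℤ)],
 ![171102840, (-148605388 : ℤ), (-445641112 : ℤ), 387052092]]

def mMb01 : Matrix Q2 Q2 ℤ := Matrix.of fun p q => mTb01 (qidx p) (qidx q)

def mvTb01 : Fin 4 → Fin 4 → ℤ :=
![![80899289, (-65695336 : ℤ), (-210675852 : ℤ), 171102840],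
 ![0, 300891946924449, 1847429758544, (-781411666414892 : ℤ)],
 ![0, 0, 6276106126241553523, (-13731100835742094 : ℤ)],
 ![0, 0, 0, 1]]

def mab01 : Fin 4 → ℤ := ![1888429791429282737896503670783827, 6276106126241553523, 323597156, 12734286042068957274908711860511633363354594388]

def mlb01 : ℤ := 152772627453047267275800502552301676999003


set_option maxHeartbeats 16000000 in
lemma idMb01 : mlb01 • mMb01 = ∑ k : Fin 4,
    vecMulVec (fun p => mab01 k * mvTb01 k (qidx p)) (fun p => mvTb01 k (qidx p)) := by
  decide

def mTb10 : Fin 4 → Fin 4 → ℤ :=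
![![425122692, (-217953714 : ℤ), 217953714, 425117324],
 ![(-217953714 : ℤ), 111748220, (-111742852 : ℤ), (-217953714 : ℤ)],
 ![217953714, (-111742852 : ℤ), 111748220, 217953714],
 ![425117324, (-217953714 : ℤ), 217953714, 425122692]]

def mMb10 : Matrix Q2 Q2 ℤ := Matrix.of fun p q => mTb10 (qidx p) (qidx q)

def mvTb10 : Fin 4 → Fin 4 → ℤ :=
![![212561346, (-108976857 : ℤ), 108976857, 212558662],
 ![0, 240222184537, (-50050633649 : ℤ), (-97497961396 : ℤ)],
 ![0, 0, 145136409093, 48748980698],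
 ![0, 0, 0, 1]]

def mab10 : Fin 4 → ℤ := ![11621661749392056931647, 145136409093, 380343101776, 10977056264126613229884391921586192]

def mlb10 : ℤ := 1235158032103745151549758158431


set_option maxHeartbeats 16000000 in
lemma idMb10 : mlb10 • mMb10 = ∑ k : Fin 4,
    vecMulVec (fun p => mab10 k * mvTb10 k (qidx p)) (fun p => mvTb10 k (qidx p)) := by
  decide

def mTb11 : Fin 4 → Fin 4 → ℤ :=
![![16345301, 122549168, 6469228, 47026272],
 ![122549168, 919429129, 48535032, 352812012],
 ![6469228, 48535032, 2572844, 18624536],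
 ![47026272, 352812012, 18624536, 135396668]]

def mMb11 : Matrix Q2 Q2 ℤ := Matrix.of fun p q => mTb11 (qidx p) (qidx q)

def mvTb11 : Fin 4 → Fin 4 → ℤ :=
![![16345301, 122549168, 6469228, 47026272],
 ![0, 1435326311515, 74456868904, 541146401988],
 ![0, 0, 27040463896947979, 533145362061638],
 ![0, 0, 0, 1]]

def mab11 : Fin 4 → ℤ := ![38811889306860865763903678185, 189283247278635853, 9340172, 7793659265685601024090814455392480600140]

def mlb11 : ℤ := 634392013099322216031600554940958685


set_option maxHeartbeats 16000000 in
lemma idMb11 : mlb11 • mMb11 = ∑ k : Fin 4,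
    vecMulVec (fun p => mab11 k * mvTb11 k (qidx p)) (fun p => mvTb11 k (qidx p)) := by
  decide


set_option maxHeartbeats 16000000 in
lemma ptrA0 : ptr2Z (mMa00 + mMa10) = (2 ^ 30 : ℤ) • (1 : Matrix (Fin 2) (Fin 2) ℤ) := by decide
set_option maxHeartbeats 16000000 in
lemma ptrA1 : ptr2Z (mMa01 + mMa11) = (2 ^ 30 : ℤ) • (1 : Matrix (Fin 2) (Fin 2) ℤ) := by decide
set_option maxHeartbeats 16000000 in
lemma ptrB0 : ptr2Z (mMb00 + mMb10) = (2 ^ 30 : ℤ) • (1 : Matrix (Fin 2) (Fin 2) ℤ) := by decide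
set_option maxHeartbeats 16000000 in
lemma ptrB1 : ptr2Z (mMb01 + mMb11) = (2 ^ 30 : ℤ) • (1 : Matrix (Fin 2) (Fin 2) ℤ) := by decide


set_option maxHeartbeats 16000000 in
lemma trT1 : (WI * (mMa00 ⊗ₖ mMb01)).trace = (549328901510344795564490968 : ℤ) := by decide


set_option maxHeartbeats 16000000 in
lemma trT2 : (WI * (mMa10 ⊗ₖ mMb01)).trace = (549328901510344795564490968 : ℤ) := by decide


set_option maxHeartbeats 16000000 in
lemma trT3 : (WI * (mMa01 ⊗ₖ mMb00)).trace = (549369971984173503166485920 : ℤ) := by decide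


set_option maxHeartbeats 16000000 in
lemma trT4 : (WI * (mMa01 ⊗ₖ mMb10)).trace = (549369971984173503166485920 : ℤ) := by decide


set_option maxHeartbeats 16000000 in
lemma trT5 : (WI * (mMa11 ⊗ₖ mMb11)).trace = (823768337482349559529934564 : ℤ) := by decide

-- ======================= complex-level objects =======================

noncomputable def c30 : ℂ := ((2 : ℂ) ^ 30)⁻¹

lemma star_c30' : star c30 = c30 := by simp [c30]

lemma nonneg_c30' : 0 ≤ c30 := nonneg_c30

lemma psd_smul' (c : ℂ) (hc : 0 ≤ c) {n : Type*} [Fintype n]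
    {M : Matrix n n ℂ} (hM : M.PosSemidef) : (c • M).PosSemidef := by
  have him : star c = c := by
    have h2 := Complex.nonneg_iff.mp hc
    apply Complex.ext
    · simp
    · simp [← h2.2]
  refine Matrix.posSemidef_iff_dotProduct_mulVec.mpr ⟨?_, ?_⟩
  · ext i j
    have h1 := congrFun (congrFun hM.1 i) j
    simp only [Matrix.conjTranspose_apply, Matrix.smul_apply, smul_eq_mul, star_mul'] at *
    rw [him, h1]
  · intro x
    rw [Matrix.smul_mulVec, dotProduct_smul, smul_eq_mul]
    exact mul_nonneg hc (hM.dotProduct_mulVec_nonneg x)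

lemma nonneg_inv_intCast (L : ℤ) (hL : 0 ≤ L) : 0 ≤ ((L : ℂ))⁻¹ := by
  have : ((L : ℂ))⁻¹ = ((((L : ℝ))⁻¹ : ℝ) : ℂ) := by push_cast; ring
  rw [this, Complex.zero_le_real]
  have : (0 : ℝ) ≤ (L : ℝ) := by exact_mod_cast hL
  positivity

lemma psd_czM_of_id {n : Type*} [Fintype n] [DecidableEq n] (L : ℤ) (hL : 0 < L) (m : ℕ)
    (M : Matrix n n ℤ) (a : Fin m → ℤ) (ha : ∀ k, 0 ≤ a k) (v : Fin m → n → ℤ)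
    (h : L • M = ∑ k, vecMulVec (fun p => a k * v k p) (v k)) : (czM M).PosSemidef := by
  have h2 : (L : ℂ) • czM M = ∑ k,
      vecMulVec (fun p => (a k : ℂ) * (v k p : ℂ)) (fun p => (v k p : ℂ)) := by
    rw [← czM_smul, h, czM_rank1_sum]
  have hpsd : (∑ k, vecMulVec (fun p => (a k : ℂ) * (v k p : ℂ))
      (fun p => (v k p : ℂ))).PosSemidef :=
    psd_sum m _ (fun k => psd_term (a k) (ha k) (v k))
  have hLne : (L : ℂ) ≠ 0 := by
    exact_mod_cast hL.ne'
  have h3 : czM M = ((L : ℂ))⁻¹ • ∑ k,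
      vecMulVec (fun p => (a k : ℂ) * (v k p : ℂ)) (fun p => (v k p : ℂ)) := by
    rw [← h2, inv_smul_smul₀ hLne]
  rw [h3]
  exact psd_smul' _ (nonneg_inv_intCast L hL.le) hpsd

lemma conjM_smul_czM {m' n' : Type*} (c : ℂ) (hc : star c = c) (M : Matrix m' n' ℤ) :
    conjM (c • czM M) = c • czM M := by
  ext i j
  simp only [conjM, Matrix.map_apply, Matrix.smul_apply, czM_apply, smul_eq_mul]
  rw [_root_.map_mul, map_intCast, show (starRingEnd ℂ) c = c from hc]

noncomputable def Wc : Matrix (Q2 × Q2) (Q2 × Q2) ℂ := c30 • czM WI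

noncomputable def mMA : Fin 2 → Fin 2 → Matrix Q2 Q2 ℤ := ![![mMa00, mMa01], ![mMa10, mMa11]]
noncomputable def mMB : Fin 2 → Fin 2 → Matrix Q2 Q2 ℤ := ![![mMb00, mMb01], ![mMb10, mMb11]]

noncomputable def MAc : Fin 2 → Fin 2 → Matrix Q2 Q2 ℂ := fun a x => c30 • czM (mMA a x)
noncomputable def MBc : Fin 2 → Fin 2 → Matrix Q2 Q2 ℂ := fun b y => c30 • czM (mMB b y)

lemma psdWI : (czM WI).PosSemidef :=
  psd_czM_of_id lwdiv lwdiv_pos 16 WI wa wa_nonneg wv idW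


lemma nna00 : ∀ k, 0 ≤ maa00 k := by decide
lemma psda00 : (czM mMa00).PosSemidef :=
  psd_czM_of_id mla00 (by decide) 4 mMa00 maa00 nna00
    (fun k p => mvTa00 k (qidx p)) idMa00


lemma nna01 : ∀ k, 0 ≤ maa01 k := by decide
lemma psda01 : (czM mMa01).PosSemidef :=
  psd_czM_of_id mla01 (by decide) 4 mMa01 maa01 nna01
    (fun k p => mvTa01 k (qidx p)) idMa01


lemma nna10 : ∀ k, 0 ≤ maa10 k := by decide
lemma psda10 : (czM mMa10).PosSemidef :=
  psd_czM_of_id mla10 (by decide) 4 mMa10 maa10 nna10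
    (fun k p => mvTa10 k (qidx p)) idMa10


lemma nna11 : ∀ k, 0 ≤ maa11 k := by decide
lemma psda11 : (czM mMa11).PosSemidef :=
  psd_czM_of_id mla11 (by decide) 4 mMa11 maa11 nna11
    (fun k p => mvTa11 k (qidx p)) idMa11


lemma nnb00 : ∀ k, 0 ≤ mab00 k := by decide
lemma psdb00 : (czM mMb00).PosSemidef :=
  psd_czM_of_id mlb00 (by decide) 4 mMb00 mab00 nnb00
    (fun k p => mvTb00 k (qidx p)) idMb00


lemma nnb01 : ∀ k, 0 ≤ mab01 k := by decide
lemma psdb01 : (czM mMb01).PosSemidef :=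
  psd_czM_of_id mlb01 (by decide) 4 mMb01 mab01 nnb01
    (fun k p => mvTb01 k (qidx p)) idMb01


lemma nnb10 : ∀ k, 0 ≤ mab10 k := by decide
lemma psdb10 : (czM mMb10).PosSemidef :=
  psd_czM_of_id mlb10 (by decide) 4 mMb10 mab10 nnb10
    (fun k p => mvTb10 k (qidx p)) idMb10


lemma nnb11 : ∀ k, 0 ≤ mab11 k := by decide
lemma psdb11 : (czM mMb11).PosSemidef :=
  psd_czM_of_id mlb11 (by decide) 4 mMb11 mab11 nnb11
    (fun k p => mvTb11 k (qidx p)) idMb11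


-- ======================= null-trace lemmas =======================

lemma ptr_comp (N : Matrix Q2 Q2 ℂ) (hptr : ptr2 N = 1) (i j : Fin 2) :
    N (i, 0) (j, 0) + N (i, 1) (j, 1) = (1 : Matrix (Fin 2) (Fin 2) ℂ) i j := by
  have h := congrFun (congrFun hptr i) j
  simpa [ptr2, Fin.sum_univ_two] using h

lemma traceId2 (N : Matrix Q2 Q2 ℂ) (hptr : ptr2 N = 1) : N.trace = 2 := by
  have h00 := ptr_comp N hptr 0 0
  have h11 := ptr_comp N hptr 1 1
  simp only [Matrix.one_apply_eq] at h00 h11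
  simp only [Matrix.trace, Matrix.diag, Fintype.sum_prod_type, Fin.sum_univ_two]
  linear_combination h00 + h11

lemma traceXI (N : Matrix Q2 Q2 ℂ) (hptr : ptr2 N = 1) :
    ((czM X2 ⊗ₖ czM (1 : Matrix (Fin 2) (Fin 2) ℤ)) * N).trace = 0 := by
  have h01 := ptr_comp N hptr 0 1
  have h10 := ptr_comp N hptr 1 0
  simp only [Matrix.one_apply, if_neg (by decide : ¬ (0 : Fin 2) = 1),
    if_neg (by decide : ¬ (1 : Fin 2) = 0)] at h01 h10
  simp only [Matrix.trace, Matrix.diag, Matrix.mul_apply, Fintype.sum_prod_type,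
    Fin.sum_univ_two, Matrix.kroneckerMap_apply, czM_apply, X2, Matrix.one_apply,
    Matrix.cons_val', Matrix.cons_val_zero, Matrix.cons_val_one, Matrix.head_cons,
    Matrix.empty_val', Matrix.cons_val_fin_one, Matrix.head_fin_const]
  push_cast
  norm_num
  linear_combination h01 + h10

lemma traceZI (N : Matrix Q2 Q2 ℂ) (hptr : ptr2 N = 1) :
    ((czM Z2 ⊗ₖ czM (1 : Matrix (Fin 2) (Fin 2) ℤ)) * N).trace = 0 := by
  have h00 := ptr_comp N hptr 0 0
  have h11 := ptr_comp N hptr 1 1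
  simp only [Matrix.one_apply_eq] at h00 h11
  simp only [Matrix.trace, Matrix.diag, Matrix.mul_apply, Fintype.sum_prod_type,
    Fin.sum_univ_two, Matrix.kroneckerMap_apply, czM_apply, Z2, Matrix.one_apply,
    Matrix.cons_val', Matrix.cons_val_zero, Matrix.cons_val_one, Matrix.head_cons,
    Matrix.empty_val', Matrix.cons_val_fin_one, Matrix.head_fin_const]
  push_cast
  norm_num
  linear_combination h00 - h11

lemma antisym_czkron (P Q : Matrix (Fin 2) (Fin 2) ℤ) (h : (P ⊗ₖ Q)ᵀ = -(P ⊗ₖ Q)) :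
    (czM P ⊗ₖ czM Q)ᵀ = -(czM P ⊗ₖ czM Q) := by
  rw [← czM_kron, czM_transpose, h, czM_neg]


lemma hdecomp : czM WI = ((268435456 : ℤ) : ℂ) • (czM (1 : Matrix Q2 Q2 ℤ) ⊗ₖ czM (1 : Matrix Q2 Q2 ℤ)) + (czM X2 ⊗ₖ czM (1 : Matrix (Fin 2) (Fin 2) ℤ)) ⊗ₖ czM RM0 + (czM Z2 ⊗ₖ czM (1 : Matrix (Fin 2) (Fin 2) ℤ)) ⊗ₖ czM RM1 + (czM Yh ⊗ₖ czM (1 : Matrix (Fin 2) (Fin 2) ℤ)) ⊗ₖ czM RM2 + (czM (1 : Matrix (Fin 2) (Fin 2) ℤ) ⊗ₖ czM Yh) ⊗ₖ czM RM3 + (czM X2 ⊗ₖ czM Yh) ⊗ₖ czM RM4 + (czM Yh ⊗ₖ czM X2) ⊗ₖ czM RM5 + (czM Z2 ⊗ₖ czM Yh) ⊗ₖ czM RM6 + (czM Yh ⊗ₖ czM Z2) ⊗ₖ czM RM7 + czM LM0 ⊗ₖ (czM X2 ⊗ₖ czM (1 : Matrix (Fin 2) (Fin 2) ℤ)) + czM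 LM1 ⊗ₖ (czM Z2 ⊗ₖ czM (1 : Matrix (Fin 2) (Fin 2) ℤ)) := by
  rw [idDecomp]
  simp only [czM_add, czM_smul, czM_kron]


theorem normW (NA NB : Matrix Q2 Q2 ℂ) (hA : IsRealCPTPChoi NA) (hB : IsRealCPTPChoi NB) :
    (Wc * (NA ⊗ₖ NB)).trace = 1 := by
  obtain ⟨hAc, hApsd, hAptr⟩ := hA
  obtain ⟨hBc, hBpsd, hBptr⟩ := hB
  have hAT := transpose_of_real_herm hAc hApsd.1
  have hBT := transpose_of_real_herm hBc hBpsd.1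
  have hanti2 : ((czM Yh ⊗ₖ czM (1 : Matrix (Fin 2) (Fin 2) ℤ)))ᵀ = -((czM Yh ⊗ₖ czM (1 : Matrix (Fin 2) (Fin 2) ℤ))) := antisym_czkron _ _ (by decide)
  have hanti3 : ((czM (1 : Matrix (Fin 2) (Fin 2) ℤ) ⊗ₖ czM Yh))ᵀ = -((czM (1 : Matrix (Fin 2) (Fin 2) ℤ) ⊗ₖ czM Yh)) := antisym_czkron _ _ (by decide)
  have hanti4 : ((czM X2 ⊗ₖ czM Yh))ᵀ = -((czM X2 ⊗ₖ czM Yh)) := antisym_czkron _ _ (by decide)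
  have hanti5 : ((czM Yh ⊗ₖ czM X2))ᵀ = -((czM Yh ⊗ₖ czM X2)) := antisym_czkron _ _ (by decide)
  have hanti6 : ((czM Z2 ⊗ₖ czM Yh))ᵀ = -((czM Z2 ⊗ₖ czM Yh)) := antisym_czkron _ _ (by decide)
  have hanti7 : ((czM Yh ⊗ₖ czM Z2))ᵀ = -((czM Yh ⊗ₖ czM Z2)) := antisym_czkron _ _ (by decide)
  have htr2 : (((czM Yh ⊗ₖ czM (1 : Matrix (Fin 2) (Fin 2) ℤ))) * NA).trace = 0 := trace_antisym hanti2 hAT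
  have htr3 : (((czM (1 : Matrix (Fin 2) (Fin 2) ℤ) ⊗ₖ czM Yh)) * NA).trace = 0 := trace_antisym hanti3 hAT
  have htr4 : (((czM X2 ⊗ₖ czM Yh)) * NA).trace = 0 := trace_antisym hanti4 hAT
  have htr5 : (((czM Yh ⊗ₖ czM X2)) * NA).trace = 0 := trace_antisym hanti5 hAT
  have htr6 : (((czM Z2 ⊗ₖ czM Yh)) * NA).trace = 0 := trace_antisym hanti6 hAT
  have htr7 : (((czM Yh ⊗ₖ czM Z2)) * NA).trace = 0 := trace_antisym hanti7 hAT
  have htrXA : ((czM X2 ⊗ₖ czM (1 : Matrix (Fin 2) (Fin 2) ℤ)) * NA).trace = 0 := traceXI NA hAptr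
  have htrZA : ((czM Z2 ⊗ₖ czM (1 : Matrix (Fin 2) (Fin 2) ℤ)) * NA).trace = 0 := traceZI NA hAptr
  have htrXB : ((czM X2 ⊗ₖ czM (1 : Matrix (Fin 2) (Fin 2) ℤ)) * NB).trace = 0 := traceXI NB hBptr
  have htrZB : ((czM Z2 ⊗ₖ czM (1 : Matrix (Fin 2) (Fin 2) ℤ)) * NB).trace = 0 := traceZI NB hBptr
  have htrIA : (czM (1 : Matrix Q2 Q2 ℤ) * NA).trace = 2 := by
    rw [czM_one, Matrix.one_mul]; exact traceId2 NA hAptr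
  have htrIB : (czM (1 : Matrix Q2 Q2 ℤ) * NB).trace = 2 := by
    rw [czM_one, Matrix.one_mul]; exact traceId2 NB hBptr
  have expand : ∀ (P R : Matrix Q2 Q2 ℂ),
      ((P ⊗ₖ R) * (NA ⊗ₖ NB)).trace = (P * NA).trace * (R * NB).trace := by
    intro P R
    rw [← Matrix.mul_kronecker_mul, Matrix.trace_kronecker]
  show (((c30 • czM WI)) * (NA ⊗ₖ NB)).trace = 1
  rw [hdecomp]
  simp only [Matrix.add_mul, Matrix.smul_mul, Matrix.trace_add, Matrix.trace_smul, expand]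
  rw [htrXA, htrZA, htr2, htr3, htr4, htr5, htr6, htr7, htrXB, htrZB, htrIA, htrIB]
  simp only [zero_mul, mul_zero, add_zero, zero_add, smul_eq_mul]
  norm_num [c30]


lemma trace_pval (X Y : Matrix Q2 Q2 ℤ) (T : ℤ) (h : (WI * (X ⊗ₖ Y)).trace = T) :
    ((c30 • czM WI) * ((c30 • czM X) ⊗ₖ (c30 • czM Y))).trace
      = (((T : ℝ) / 2 ^ 90 : ℝ) : ℂ) := by
  rw [Matrix.smul_kronecker, Matrix.kronecker_smul, ← czM_kron]
  rw [Matrix.smul_mul, Matrix.mul_smul, Matrix.mul_smul, ← czM_mul]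
  rw [Matrix.trace_smul, Matrix.trace_smul, Matrix.trace_smul, czM_trace, h]
  simp only [smul_eq_mul, c30]
  push_cast
  ring



lemma hsumA0 : (∑ a, MAc a 0) = c30 • czM (mMa00 + mMa10) := by
  rw [Fin.sum_univ_two, czM_add, smul_add]
  rfl

lemma instrA0 : IsRealCPTPChoi (∑ a, MAc a 0) := by
  rw [hsumA0]
  refine ⟨conjM_smul_czM c30 star_c30' _, psd_smul' c30 nonneg_c30' ?_, ?_⟩
  · rw [czM_add]
    exact psda00.add psda10
  · rw [ptr2_smul, ptr2_czM, ptrA0, czM_smul, czM_one, smul_smul]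
    rw [show c30 * (((2 ^ 30 : ℤ)) : ℂ) = 1 by norm_num [c30], one_smul]


lemma hsumA1 : (∑ a, MAc a 1) = c30 • czM (mMa01 + mMa11) := by
  rw [Fin.sum_univ_two, czM_add, smul_add]
  rfl

lemma instrA1 : IsRealCPTPChoi (∑ a, MAc a 1) := by
  rw [hsumA1]
  refine ⟨conjM_smul_czM c30 star_c30' _, psd_smul' c30 nonneg_c30' ?_, ?_⟩
  · rw [czM_add]
    exact psda01.add psda11
  · rw [ptr2_smul, ptr2_czM, ptrA1, czM_smul, czM_one, smul_smul]
    rw [show c30 * (((2 ^ 30 : ℤ)) : ℂ) = 1 by norm_num [c30], one_smul]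


lemma hsumB0 : (∑ a, MBc a 0) = c30 • czM (mMb00 + mMb10) := by
  rw [Fin.sum_univ_two, czM_add, smul_add]
  rfl

lemma instrB0 : IsRealCPTPChoi (∑ a, MBc a 0) := by
  rw [hsumB0]
  refine ⟨conjM_smul_czM c30 star_c30' _, psd_smul' c30 nonneg_c30' ?_, ?_⟩
  · rw [czM_add]
    exact psdb00.add psdb10
  · rw [ptr2_smul, ptr2_czM, ptrB0, czM_smul, czM_one, smul_smul]
    rw [show c30 * (((2 ^ 30 : ℤ)) : ℂ) = 1 by norm_num [c30], one_smul]


lemma hsumB1 : (∑ a, MBc a 1) = c30 • czM (mMb01 + mMb11) := by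
  rw [Fin.sum_univ_two, czM_add, smul_add]
  rfl

lemma instrB1 : IsRealCPTPChoi (∑ a, MBc a 1) := by
  rw [hsumB1]
  refine ⟨conjM_smul_czM c30 star_c30' _, psd_smul' c30 nonneg_c30' ?_, ?_⟩
  · rw [czM_add]
    exact psdb01.add psdb11
  · rw [ptr2_smul, ptr2_czM, ptrB1, czM_smul, czM_one, smul_smul]
    rw [show c30 * (((2 ^ 30 : ℤ)) : ℂ) = 1 by norm_num [c30], one_smul]


lemma hT1 : ((Wc * (MAc 0 0 ⊗ₖ MBc 0 1)).trace).re = ((549328901510344795564490968 : ℝ) / 2 ^ 90) := by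
  have h := trace_pval mMa00 mMb01 549328901510344795564490968 trT1
  show (((c30 • czM WI) * ((c30 • czM mMa00) ⊗ₖ (c30 • czM mMb01))).trace).re = _
  rw [h, Complex.ofReal_re]
  norm_num


lemma hT2 : ((Wc * (MAc 1 0 ⊗ₖ MBc 0 1)).trace).re = ((549328901510344795564490968 : ℝ) / 2 ^ 90) := by
  have h := trace_pval mMa10 mMb01 549328901510344795564490968 trT2
  show (((c30 • czM WI) * ((c30 • czM mMa10) ⊗ₖ (c30 • czM mMb01))).trace).re = _
  rw [h, Complex.ofReal_re]
  norm_num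


lemma hT3 : ((Wc * (MAc 0 1 ⊗ₖ MBc 0 0)).trace).re = ((549369971984173503166485920 : ℝ) / 2 ^ 90) := by
  have h := trace_pval mMa01 mMb00 549369971984173503166485920 trT3
  show (((c30 • czM WI) * ((c30 • czM mMa01) ⊗ₖ (c30 • czM mMb00))).trace).re = _
  rw [h, Complex.ofReal_re]
  norm_num


lemma hT4 : ((Wc * (MAc 0 1 ⊗ₖ MBc 1 0)).trace).re = ((549369971984173503166485920 : ℝ) / 2 ^ 90) := by
  have h := trace_pval mMa01 mMb10 549369971984173503166485920 trT4
  show (((c30 • czM WI) * ((c30 • czM mMa01) ⊗ₖ (c30 • czM mMb10))).trace).re = _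
  rw [h, Complex.ofReal_re]
  norm_num


lemma hT5 : ((Wc * (MAc 1 1 ⊗ₖ MBc 1 1)).trace).re = ((823768337482349559529934564 : ℝ) / 2 ^ 90) := by
  have h := trace_pval mMa11 mMb11 823768337482349559529934564 trT5
  show (((c30 • czM WI) * ((c30 • czM mMa11) ⊗ₖ (c30 • czM mMb11))).trace).re = _
  rw [h, Complex.ofReal_re]
  norm_num


lemma lgyni_val : lgyni Wc MAc MBc = (1 / 4) * (1 + ((549328901510344795564490968 : ℝ) / 2 ^ 90) + ((549328901510344795564490968 : ℝ) / 2 ^ 90) + ((549369971984173503166485920 : ℝ) / 2 ^ 90) + ((549369971984173503166485920 : ℝ) / 2 ^ 90) + ((823768337482349559529934564 : ℝ) / 2 ^ 90)) := by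
  simp only [lgyni]
  rw [hT1, hT2, hT3, hT4, hT5]

set_option maxHeartbeats 1600000

/-- There is a bipartite qubit RQT process realization — a real
symmetric positive semidefinite process matrix `W` normalized on all products of
real CPTP Choi matrices, together with real local binary-outcome instruments —
whose correlation has LGYNI value at least `0.86`, strictly exceeding both the
causal bound `3/4` and the complex-QT process bound `0.8194`. -/
theorem rqt_lgyni_violation :
    ∃ (W : Matrix (Q2 × Q2) (Q2 × Q2) ℂ)
      (MA MB : Fin 2 → Fin 2 → Matrix Q2 Q2 ℂ),
      -- `W` is a bipartite RQT process matrix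
      conjM W = W ∧ Wᵀ = W ∧ W.PosSemidef ∧
      (∀ NA NB : Matrix Q2 Q2 ℂ, IsRealCPTPChoi NA → IsRealCPTPChoi NB →
        (W * (NA ⊗ₖ NB)).trace = 1) ∧
      -- real local binary-outcome instruments
      (∀ a x, conjM (MA a x) = MA a x ∧ (MA a x).PosSemidef) ∧
      (∀ x, IsRealCPTPChoi (∑ a, MA a x)) ∧
      (∀ b y, conjM (MB b y) = MB b y ∧ (MB b y).PosSemidef) ∧
      (∀ y, IsRealCPTPChoi (∑ b, MB b y)) ∧
      -- the LGYNI value of the generated correlation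
      0.86 ≤ lgyni W MA MB ∧
      3 / 4 < lgyni W MA MB ∧
      0.8194 < lgyni W MA MB := by
  refine ⟨Wc, MAc, MBc, ?_, ?_, ?_, normW, ?_, ?_, ?_, ?_, ?_, ?_, ?_⟩
  · exact conjM_smul_czM c30 star_c30' WI
  · show (c30 • czM WI)ᵀ = c30 • czM WI
    rw [Matrix.transpose_smul, czM_transpose, symWI]
  · exact psd_smul' c30 nonneg_c30' psdWI
  · intro a x
    fin_cases a <;> fin_cases x
    · exact ⟨conjM_smul_czM c30 star_c30' _, psd_smul' c30 nonneg_c30' psda00⟩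
    · exact ⟨conjM_smul_czM c30 star_c30' _, psd_smul' c30 nonneg_c30' psda01⟩
    · exact ⟨conjM_smul_czM c30 star_c30' _, psd_smul' c30 nonneg_c30' psda10⟩
    · exact ⟨conjM_smul_czM c30 star_c30' _, psd_smul' c30 nonneg_c30' psda11⟩
  · intro x
    fin_cases x
    · exact instrA0
    · exact instrA1
  · intro b y
    fin_cases b <;> fin_cases y
    · exact ⟨conjM_smul_czM c30 star_c30' _, psd_smul' c30 nonneg_c30' psdb00⟩
    · exact ⟨conjM_smul_czM c30 star_c30' _, psd_smul' c30 nonneg_c30' psdb01⟩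
    · exact ⟨conjM_smul_czM c30 star_c30' _, psd_smul' c30 nonneg_c30' psdb10⟩
    · exact ⟨conjM_smul_czM c30 star_c30' _, psd_smul' c30 nonneg_c30' psdb11⟩
  · intro y
    fin_cases y
    · exact instrB0
    · exact instrB1
  · rw [lgyni_val]; norm_num
  · rw [lgyni_val]; norm_num
  · rw [lgyni_val]; norm_num
end
end

section
/- A 4×4 matrix W on ℂ²⊗ℂ² (factors A_1, A_2) is a single-party RQT process matrix — i.e. W is real (W = conj(W)), W ⪰ 0, and Tr[W·M] = 1 for every real CPTP Choi matrix M on A_1A_2 — if and only if W has the form W = (1/2)(I⊗I + v_x·σx⊗I + v_z·σz⊗I) for some real v_x, v_z with W ⪰ 0 (equivalently v_x² + v_z² ≤ 1); i.e. W is a real qubit state on the input system tensored with the maximally mixed operator on the output. -/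
open Matrix BigOperators
open scoped Kronecker ComplexOrder

noncomputable section

def σx : Matrix (Fin 2) (Fin 2) ℂ := !![0, 1; 1, 0]
def σz : Matrix (Fin 2) (Fin 2) ℂ := !![1, 0; 0, -1]

/-- The Pauli Y matrix (auxiliary). -/
def σy : Matrix (Fin 2) (Fin 2) ℂ := !![0, -Complex.I; Complex.I, 0]

lemma ptr2_kron (A B : Matrix (Fin 2) (Fin 2) ℂ) : ptr2 (A ⊗ₖ B) = B.trace • A := by
  ext i j
  simp [ptr2, Matrix.trace, Fin.sum_univ_two, Matrix.kroneckerMap_apply]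
  ring

lemma conjM_kron (A B : Matrix (Fin 2) (Fin 2) ℂ) :
    conjM (A ⊗ₖ B) = conjM A ⊗ₖ conjM B := by
  ext ⟨i, z⟩ ⟨j, w⟩
  simp [conjM, Matrix.kroneckerMap_apply]

lemma kron_conjT (A B : Matrix (Fin 2) (Fin 2) ℂ) :
    (A ⊗ₖ B)ᴴ = Aᴴ ⊗ₖ Bᴴ := by
  ext ⟨i, z⟩ ⟨j, w⟩
  simp [Matrix.conjTranspose_apply, Matrix.kroneckerMap_apply]

lemma conj_σx : conjM σx = σx := by
  ext i j; fin_cases i <;> fin_cases j <;> simp [conjM, σx]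
lemma conj_σz : conjM σz = σz := by
  ext i j; fin_cases i <;> fin_cases j <;> simp [conjM, σz]
lemma conj_σy : conjM σy = -σy := by
  ext i j; fin_cases i <;> fin_cases j <;> simp [conjM, σy]
lemma conj_one2 : conjM (1 : Matrix (Fin 2) (Fin 2) ℂ) = 1 := by
  ext i j; fin_cases i <;> fin_cases j <;> simp [conjM, Matrix.one_apply]
lemma herm_σx : σxᴴ = σx := by
  ext i j; fin_cases i <;> fin_cases j <;> simp [σx]
lemma herm_σz : σzᴴ = σz := by
  ext i j; fin_cases i <;> fin_cases j <;> simp [σz]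
lemma herm_σy : σyᴴ = σy := by
  ext i j; fin_cases i <;> fin_cases j <;> simp [σy]
lemma sq_σx : σx * σx = 1 := by
  ext i j; fin_cases i <;> fin_cases j <;>
    simp [σx, Matrix.mul_apply, Fin.sum_univ_two, Matrix.one_apply]
lemma sq_σz : σz * σz = 1 := by
  ext i j; fin_cases i <;> fin_cases j <;>
    simp [σz, Matrix.mul_apply, Fin.sum_univ_two, Matrix.one_apply]
lemma sq_σy : σy * σy = 1 := by
  ext i j; fin_cases i <;> fin_cases j <;>
    simp [σy, Matrix.mul_apply, Fin.sum_univ_two, Matrix.one_apply, Complex.I_mul_I]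
lemma tr_σx : σx.trace = 0 := by simp [Matrix.trace, Fin.sum_univ_two, σx]
lemma tr_σz : σz.trace = 0 := by simp [Matrix.trace, Fin.sum_univ_two, σz]
lemma tr_σy : σy.trace = 0 := by simp [Matrix.trace, Fin.sum_univ_two, σy]

lemma choi_of_pauli (P : Matrix Q2 Q2 ℂ) (hc : conjM P = P) (hh : Pᴴ = P)
    (hsq : P * P = 1) (ht : ptr2 P = 0) (ε : ℂ) (hε : ε = 1 ∨ ε = -1) :
    IsRealCPTPChoi ((1/2 : ℂ) • (1 + ε • P)) := by
  have hε2 : ε * ε = 1 := by rcases hε with h | h <;> subst h <;> ring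
  have hεr : (starRingEnd ℂ) ε = ε := by rcases hε with h | h <;> subst h <;> simp
  refine ⟨?_, ?_, ?_⟩
  · ext i j
    have h1 := congrFun (congrFun hc i) j
    simp only [conjM, Matrix.map_apply] at h1 ⊢
    simp only [Matrix.smul_apply, Matrix.add_apply, Matrix.one_apply, smul_eq_mul]
    rcases eq_or_ne i j with h | h
    · subst h
      simp [map_add, _root_.map_mul, hεr, h1, map_ofNat, map_div₀, _root_.map_one]
    · simp [h, map_add, _root_.map_mul, hεr, h1, map_ofNat, map_div₀, _root_.map_one]
  · have key : (1 + ε • P) * (1 + ε • P) = (2:ℂ) • (1 + ε • P) := by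
      simp only [add_mul, mul_add, one_mul, mul_one, Matrix.mul_smul, Matrix.smul_mul,
        smul_smul, hsq, hε2, one_smul]
      module
    have hmm : ((1/2 : ℂ) • (1 + ε • P)) * ((1/2 : ℂ) • (1 + ε • P))
        = (1/2 : ℂ) • (1 + ε • P) := by
      rw [Matrix.smul_mul, Matrix.mul_smul, key, smul_smul, smul_smul]
      norm_num
    have hherm : ((1/2 : ℂ) • (1 + ε • P))ᴴ = (1/2 : ℂ) • (1 + ε • P) := by
      simp [Matrix.conjTranspose_smul, Matrix.conjTranspose_add, hh, hεr]
    have := Matrix.posSemidef_conjTranspose_mul_self ((1/2 : ℂ) • (1 + ε • P))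
    rwa [hherm, hmm] at this
  · ext i j
    have h1 := congrFun (congrFun ht i) j
    simp only [ptr2, Matrix.zero_apply] at h1
    rw [Fin.sum_univ_two] at h1
    simp only [ptr2, Matrix.smul_apply, Matrix.add_apply, Matrix.one_apply, smul_eq_mul,
      Prod.mk.injEq]
    rw [Fin.sum_univ_two]
    rcases eq_or_ne i j with h | h
    · subst h
      simp only [and_self, if_true, if_pos rfl, and_true, Matrix.one_apply_eq]
      linear_combination (ε/2) * h1
    · simp only [h, false_and, and_false, if_false, if_neg, Matrix.one_apply_ne h, not_false_iff]
      linear_combination (ε/2) * h1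

lemma choi_kron (A B : Matrix (Fin 2) (Fin 2) ℂ)
    (hc : conjM (A ⊗ₖ B) = A ⊗ₖ B) (hh : (A ⊗ₖ B)ᴴ = A ⊗ₖ B)
    (hA : A * A = 1) (hB : B * B = 1) (hBtr : B.trace = 0) (ε : ℂ) (hε : ε = 1 ∨ ε = -1) :
    IsRealCPTPChoi ((1/2 : ℂ) • (1 + ε • (A ⊗ₖ B))) :=
  choi_of_pauli _ hc hh
    (by rw [← Matrix.mul_kronecker_mul, hA, hB, Matrix.one_kronecker_one])
    (by rw [ptr2_kron, hBtr, zero_smul]) ε hε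

lemma trace_expand (W P : Matrix Q2 Q2 ℂ) (ε : ℂ) :
    (W * ((1/2 : ℂ) • (1 + ε • P))).trace = (1/2) * (W.trace + ε * (W * P).trace) := by
  rw [Matrix.mul_smul, Matrix.mul_add, Matrix.mul_one, Matrix.mul_smul]
  simp [Matrix.trace_add, Matrix.trace_smul, smul_eq_mul]
  ring

/-- single-party qubit RQT process matrices.
A matrix `W` on `A₁A₂` is a single-party RQT process matrix — real, positive
semidefinite, and normalized on every real CPTP Choi matrix — if and only if
`W = (1/2)(I⊗I + v_x σx⊗I + v_z σz⊗I)` for some real `v_x, v_z` with `W ⪰ 0`;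
i.e. `W` is a real qubit state on the input tensored with the maximally mixed
operator on the output. -/
theorem single_party_rqt_process_characterisation
    (W : Matrix Q2 Q2 ℂ) :
    (conjM W = W ∧ W.PosSemidef ∧
      (∀ M : Matrix Q2 Q2 ℂ, IsRealCPTPChoi M → (W * M).trace = 1))
    ↔
    (∃ vx vz : ℝ,
      W = (1 / 2 : ℝ) •
        ((1 : Matrix Q2 Q2 ℂ) +
          vx • (σx ⊗ₖ (1 : Matrix (Fin 2) (Fin 2) ℂ)) +
          vz • (σz ⊗ₖ (1 : Matrix (Fin 2) (Fin 2) ℂ))) ∧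
      W.PosSemidef) := by
  constructor
  · rintro ⟨hre, hpsd, htr⟩
    have hR : ∀ i j : Q2, (((W i j).re : ℝ) : ℂ) = W i j := by
      intro i j
      have h := congrFun (congrFun hre i) j
      simp only [conjM, Matrix.map_apply] at h
      exact Complex.conj_eq_iff_re.mp h
    have hS : ∀ i j : Q2, W j i = W i j := by
      intro i j
      have h1 : (starRingEnd ℂ) (W i j) = W j i := by
        have := congrFun (congrFun hpsd.1 j) i
        simpa [Matrix.conjTranspose_apply] using this
      have h2 : (starRingEnd ℂ) (W i j) = W i j := by
        simpa [conjM, Matrix.map_apply] using congrFun (congrFun hre i) j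
      rw [← h1, h2]
    have pair : ∀ P : Matrix Q2 Q2 ℂ,
        (∀ ε : ℂ, ε = 1 ∨ ε = -1 → IsRealCPTPChoi ((1/2 : ℂ) • (1 + ε • P))) →
        (W * P).trace = 0 ∧ W.trace = 2 := by
      intro P hP
      have h1 := htr _ (hP 1 (Or.inl rfl))
      have h2 := htr _ (hP (-1) (Or.inr rfl))
      rw [trace_expand] at h1 h2
      constructor
      · linear_combination h1 - h2
      · linear_combination h1 + h2
    obtain ⟨t1, hT⟩ := pair ((1 : Matrix (Fin 2) (Fin 2) ℂ) ⊗ₖ σx)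
      (choi_kron _ _ (by rw [conjM_kron, conj_one2, conj_σx])
        (by rw [kron_conjT, Matrix.conjTranspose_one, herm_σx]) (one_mul 1) sq_σx tr_σx)
    obtain ⟨t2, -⟩ := pair ((1 : Matrix (Fin 2) (Fin 2) ℂ) ⊗ₖ σz)
      (choi_kron _ _ (by rw [conjM_kron, conj_one2, conj_σz])
        (by rw [kron_conjT, Matrix.conjTranspose_one, herm_σz]) (one_mul 1) sq_σz tr_σz)
    obtain ⟨t3, -⟩ := pair (σx ⊗ₖ σx)
      (choi_kron _ _ (by rw [conjM_kron, conj_σx])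
        (by rw [kron_conjT, herm_σx]) sq_σx sq_σx tr_σx)
    obtain ⟨t4, -⟩ := pair (σx ⊗ₖ σz)
      (choi_kron _ _ (by rw [conjM_kron, conj_σx, conj_σz])
        (by rw [kron_conjT, herm_σx, herm_σz]) sq_σx sq_σz tr_σz)
    obtain ⟨t5, -⟩ := pair (σz ⊗ₖ σx)
      (choi_kron _ _ (by rw [conjM_kron, conj_σz, conj_σx])
        (by rw [kron_conjT, herm_σz, herm_σx]) sq_σz sq_σx tr_σx)
    obtain ⟨t6, -⟩ := pair (σz ⊗ₖ σz)
      (choi_kron _ _ (by rw [conjM_kron, conj_σz])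
        (by rw [kron_conjT, herm_σz]) sq_σz sq_σz tr_σz)
    obtain ⟨t7, -⟩ := pair (σy ⊗ₖ σy)
      (choi_kron _ _ (by
          rw [conjM_kron, conj_σy]
          ext ⟨i, z⟩ ⟨j, w⟩
          simp [Matrix.kroneckerMap_apply, Matrix.neg_apply])
        (by rw [kron_conjT, herm_σy]) sq_σy sq_σy tr_σy)
    -- expand the traces into entries
    have e1 : W (0,1) (0,0) + W (0,0) (0,1) + W (1,1) (1,0) + W (1,0) (1,1) = 0 := by
      rw [show W (0,1) (0,0) + W (0,0) (0,1) + W (1,1) (1,0) + W (1,0) (1,1)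
          = (W * ((1 : Matrix (Fin 2) (Fin 2) ℂ) ⊗ₖ σx)).trace from by
        simp [Matrix.trace, Matrix.mul_apply, Fintype.sum_prod_type, Fin.sum_univ_two,
          Matrix.kroneckerMap_apply, Matrix.one_apply, σx]; ring]
      exact t1
    have e2 : W (0,0) (0,0) - W (0,1) (0,1) + W (1,0) (1,0) - W (1,1) (1,1) = 0 := by
      rw [show W (0,0) (0,0) - W (0,1) (0,1) + W (1,0) (1,0) - W (1,1) (1,1)
          = (W * ((1 : Matrix (Fin 2) (Fin 2) ℂ) ⊗ₖ σz)).trace from by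
        simp [Matrix.trace, Matrix.mul_apply, Fintype.sum_prod_type, Fin.sum_univ_two,
          Matrix.kroneckerMap_apply, Matrix.one_apply, σz]; ring]
      exact t2
    have e3 : W (1,1) (0,0) + W (1,0) (0,1) + W (0,1) (1,0) + W (0,0) (1,1) = 0 := by
      rw [show W (1,1) (0,0) + W (1,0) (0,1) + W (0,1) (1,0) + W (0,0) (1,1)
          = (W * (σx ⊗ₖ σx)).trace from by
        simp [Matrix.trace, Matrix.mul_apply, Fintype.sum_prod_type, Fin.sum_univ_two,
          Matrix.kroneckerMap_apply, σx]; ring]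
      exact t3
    have e4 : W (1,0) (0,0) + W (0,0) (1,0) - W (1,1) (0,1) - W (0,1) (1,1) = 0 := by
      rw [show W (1,0) (0,0) + W (0,0) (1,0) - W (1,1) (0,1) - W (0,1) (1,1)
          = (W * (σx ⊗ₖ σz)).trace from by
        simp [Matrix.trace, Matrix.mul_apply, Fintype.sum_prod_type, Fin.sum_univ_two,
          Matrix.kroneckerMap_apply, σx, σz]; ring]
      exact t4
    have e5 : W (0,1) (0,0) + W (0,0) (0,1) - W (1,1) (1,0) - W (1,0) (1,1) = 0 := by
      rw [show W (0,1) (0,0) + W (0,0) (0,1) - W (1,1) (1,0) - W (1,0) (1,1)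
          = (W * (σz ⊗ₖ σx)).trace from by
        simp [Matrix.trace, Matrix.mul_apply, Fintype.sum_prod_type, Fin.sum_univ_two,
          Matrix.kroneckerMap_apply, σz, σx]; ring]
      exact t5
    have e6 : W (0,0) (0,0) - W (0,1) (0,1) - W (1,0) (1,0) + W (1,1) (1,1) = 0 := by
      rw [show W (0,0) (0,0) - W (0,1) (0,1) - W (1,0) (1,0) + W (1,1) (1,1)
          = (W * (σz ⊗ₖ σz)).trace from by
        simp [Matrix.trace, Matrix.mul_apply, Fintype.sum_prod_type, Fin.sum_univ_two,
          Matrix.kroneckerMap_apply, σz]; ring]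
      exact t6
    have e7 : -W (1,1) (0,0) + W (1,0) (0,1) + W (0,1) (1,0) - W (0,0) (1,1) = 0 := by
      rw [show -W (1,1) (0,0) + W (1,0) (0,1) + W (0,1) (1,0) - W (0,0) (1,1)
          = (W * (σy ⊗ₖ σy)).trace from by
        simp [Matrix.trace, Matrix.mul_apply, Fintype.sum_prod_type, Fin.sum_univ_two,
          Matrix.kroneckerMap_apply, σy, Complex.I_mul_I]; ring]
      exact t7
    have eT : W (0,0) (0,0) + W (0,1) (0,1) + W (1,0) (1,0) + W (1,1) (1,1) = 2 := by
      rw [show W (0,0) (0,0) + W (0,1) (0,1) + W (1,0) (1,0) + W (1,1) (1,1)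
          = W.trace from by
        simp [Matrix.trace, Fintype.sum_prod_type, Fin.sum_univ_two]; ring]
      exact hT
    -- symmetric-entry equalities
    have sp : W (0,1) (0,0) = W (0,0) (0,1) := hS _ _
    have su : W (1,1) (1,0) = W (1,0) (1,1) := hS _ _
    have sr : W (1,1) (0,0) = W (0,0) (1,1) := hS _ _
    have ss : W (1,0) (0,1) = W (0,1) (1,0) := hS _ _
    have sq : W (1,0) (0,0) = W (0,0) (1,0) := hS _ _
    have st : W (1,1) (0,1) = W (0,1) (1,1) := hS _ _
    -- derived entry facts
    have hp : W (0,0) (0,1) = 0 := by linear_combination (e1 + e5)/4 - sp/2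
    have hu : W (1,0) (1,1) = 0 := by linear_combination (e1 - e5)/4 - su/2
    have hr : W (0,0) (1,1) = 0 := by linear_combination (e3 - e7)/4 - sr/2
    have hs : W (0,1) (1,0) = 0 := by linear_combination (e3 + e7)/4 - ss/2
    have hq : W (0,1) (1,1) = W (0,0) (1,0) := by
      linear_combination -e4/2 + sq/2 - st/2
    have hb : W (0,1) (0,1) = W (0,0) (0,0) := by linear_combination -(e2 + e6)/2
    have hc2 : W (1,0) (1,0) = 1 - W (0,0) (0,0) := by
      linear_combination eT/2 - hb/2 + (e2 - e6)/4
    have hd2 : W (1,1) (1,1) = 1 - W (0,0) (0,0) := by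
      linear_combination eT/2 - hb/2 - (e2 - e6)/4
    simp only [Prod.mk_zero_zero, Prod.mk_one_one] at hp hu hr hs hq hb hc2 hd2 sp su sr ss sq st
    refine ⟨2 * (W (0,0) (1,0)).re, 2 * (W (0,0) (0,0)).re - 1, ?_, hpsd⟩
    ext ⟨i, z⟩ ⟨j, w⟩
    fin_cases i <;> fin_cases z <;> fin_cases j <;> fin_cases w <;>
      simp only [Matrix.smul_apply, Matrix.add_apply, Matrix.one_apply,
        Matrix.kroneckerMap_apply, σx, σz, Matrix.cons_val', Matrix.cons_val_zero,
        Matrix.cons_val_one, Matrix.head_cons, Matrix.head_fin_const, Matrix.empty_val',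
        Matrix.cons_val_fin_one, Complex.real_smul, Prod.mk.injEq, Prod.ext_iff,
        Prod.fst_zero, Prod.snd_zero]
    all_goals norm_num
    all_goals try push_cast
    all_goals try rw [hR]
    · ring
    · exact hp
    · ring
    · exact hr
    · exact sp.trans hp
    · linear_combination hb
    · exact hs
    · linear_combination hq
    · linear_combination sq
    · exact ss.trans hs
    · linear_combination hc2
    · exact hu
    · exact sr.trans hr
    · linear_combination st.trans hq
    · exact su.trans hu
    · linear_combination hd2
  · rintro ⟨vx, vz, rfl, hpsd⟩
    refine ⟨?_, hpsd, ?_⟩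
    · ext ⟨i, z⟩ ⟨j, w⟩
      fin_cases i <;> fin_cases z <;> fin_cases j <;> fin_cases w <;>
        simp [conjM, Matrix.map_apply, Matrix.smul_apply, Matrix.add_apply,
          Matrix.kroneckerMap_apply, Matrix.one_apply, σx, σz, Complex.real_smul,
          map_add, _root_.map_mul, Complex.conj_ofReal, map_inv₀, map_ofNat,
          Prod.ext_iff, Prod.fst_zero, Prod.snd_zero]
    · rintro M ⟨-, -, hMtr⟩
      have h00 := congrFun (congrFun hMtr 0) 0
      have h01 := congrFun (congrFun hMtr 0) 1
      have h10 := congrFun (congrFun hMtr 1) 0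
      have h11 := congrFun (congrFun hMtr 1) 1
      simp only [ptr2, Matrix.one_apply, Fin.sum_univ_two, if_pos rfl, Matrix.one_apply_eq,
        ne_eq, zero_ne_one, one_ne_zero, not_false_iff, Matrix.one_apply_ne,
        Prod.mk.injEq, Prod.ext_iff, Prod.fst_zero, Prod.snd_zero, if_true] at h00 h01 h10 h11
      norm_num at h01 h10
      simp only [Matrix.trace, Matrix.mul_apply, Fintype.sum_prod_type, Fin.sum_univ_two,
        Matrix.smul_apply, Matrix.add_apply, Matrix.kroneckerMap_apply, Matrix.one_apply,
        σx, σz, Complex.real_smul, Matrix.diag_apply, Matrix.cons_val', Matrix.cons_val_zero,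
        Matrix.cons_val_one, Matrix.head_cons, Prod.mk.injEq, Prod.ext_iff,
        Prod.fst_zero, Prod.snd_zero, if_true]
      norm_num
      linear_combination ((1 + (vz:ℂ))/2) * h00 + ((1 - (vz:ℂ))/2) * h11
        + ((vx:ℂ)/2) * h01 + ((vx:ℂ)/2) * h10
end
end
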